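/- arXiv:math/0505025 — 7 statements merged into one kernel-verified Lean document; each statement's English description precedes it below -/
import Mathlib

section
/- Sequences T_{1,n},…,T_{k,n} in SL(2,ℤ) are jointly mixing on 𝕋² if and only if for every (x₁,…,x_{k+1}) ∈ (ℤ²)^{k+1} not all zero, the equality (T_{1,n})ᵀ x₁ + ⋯ + (T_{k,n})ᵀ x_k + x_{k+1} = 0 holds for only finitely many n. -/
open MeasureTheory Matrix Filter Topology

noncomputable section

/-- The 2-torus ℝ²/ℤ². -/
abbrev T2 : Type := Fin 2 → AddCircle (1 : ℝ)

/-- The action of an integer matrix on the torus 𝕋². -/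
def act (M : Matrix (Fin 2) (Fin 2) ℤ) (ξ : T2) : T2 := fun i => ∑ j, M i j • ξ j

/-- Sequences `T 1, …, T k` of toral automorphisms are jointly mixing. -/
def JointMeasureMixing {k : ℕ} (T : Fin k → ℕ → Matrix (Fin 2) (Fin 2) ℤ) : Prop :=
  ∀ (f : Fin k → T2 → ℂ) (g : T2 → ℂ),
    (∀ i, Measurable (f i)) → Measurable g →
    (∀ i, ∃ C, ∀ ξ, ‖f i ξ‖ ≤ C) → (∃ C, ∀ ξ, ‖g ξ‖ ≤ C) →
    Tendsto (fun n => ∫ ξ, (∏ i, f i (act (T i n) ξ)) * g ξ) atTop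
      (𝓝 ((∏ i, ∫ ξ, f i ξ) * ∫ ξ, g ξ))

instance : IsProbabilityMeasure (volume : Measure (AddCircle (1:ℝ))) := by
  constructor; rw [AddCircle.measure_univ]; simp

lemma volume_eq_haar : (volume : Measure (AddCircle (1:ℝ))) = AddCircle.haarAddCircle := by
  rw [AddCircle.volume_eq_smul_haarAddCircle]; simp

/-- characters of the torus -/
def ee (x : Fin 2 → ℤ) : T2 → ℂ := fun ξ => ∏ j, fourier (x j) (ξ j)

lemma continuous_ee (x : Fin 2 → ℤ) : Continuous (ee x) := by
  apply continuous_finset_prod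
  exact fun j _ => (fourier (x j)).continuous.comp (continuous_apply j)

lemma measurable_ee (x : Fin 2 → ℤ) : Measurable (ee x) := (continuous_ee x).measurable

lemma norm_ee (x : Fin 2 → ℤ) (ξ : T2) : ‖ee x ξ‖ = 1 := by
  rw [ee, norm_prod]
  apply Finset.prod_eq_one
  intro j _
  rw [fourier_apply]
  exact Circle.norm_coe _

lemma ee_zero (ξ : T2) : ee 0 ξ = 1 := by
  simp [ee, fourier_zero]

lemma ee_add (x y : Fin 2 → ℤ) (ξ : T2) : ee (x + y) ξ = ee x ξ * ee y ξ := by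
  rw [ee, ee, ee, ← Finset.prod_mul_distrib]
  exact Finset.prod_congr rfl fun j _ => by rw [Pi.add_apply, fourier_add]

lemma ee_sum {α : Type*} (s : Finset α) (v : α → Fin 2 → ℤ) (ξ : T2) :
    ee (∑ i ∈ s, v i) ξ = ∏ i ∈ s, ee (v i) ξ := by
  induction s using Finset.cons_induction with
  | empty => simp [ee_zero]
  | cons a s ha ih => rw [Finset.sum_cons, Finset.prod_cons, ee_add, ih]

lemma integral_fourier (n : ℤ) :
    ∫ x : AddCircle (1:ℝ), (fourier n x : ℂ) = if n = 0 then 1 else 0 := by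
  split_ifs with h
  · subst h; simp [fourier_zero]
  · rw [volume_eq_haar]
    exact integral_eq_zero_of_add_right_eq_neg (fourier_add_half_inv_index h one_pos)

lemma integral_ee (x : Fin 2 → ℤ) :
    ∫ ξ : T2, ee x ξ = if x = 0 then 1 else 0 := by
  simp only [ee]
  rw [MeasureTheory.integral_fintype_prod_volume_eq_prod (f := fun j (t : AddCircle (1:ℝ)) => (fourier (x j) t : ℂ))]
  simp_rw [integral_fourier]
  rw [Finset.prod_boole]
  simp [funext_iff]

lemma fourier_zsmul (n m : ℤ) (x : AddCircle (1:ℝ)) :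
    fourier n (m • x) = fourier (n * m) x := by
  rw [fourier_apply, fourier_apply, smul_smul]

lemma fourier_arg_add (n : ℤ) (a b : AddCircle (1:ℝ)) :
    fourier n (a + b) = fourier n a * fourier n b := by
  rw [fourier_apply, fourier_apply, fourier_apply, smul_add, AddCircle.toCircle_add,
    Circle.coe_mul]

lemma fourier_exp_sum {α : Type*} (s : Finset α) (a : α → ℤ) (x : AddCircle (1:ℝ)) :
    fourier (∑ j ∈ s, a j) x = ∏ j ∈ s, fourier (a j) x := by
  induction s using Finset.cons_induction with
  | empty => simp [fourier_zero]
  | cons c s hc ih => rw [Finset.sum_cons, Finset.prod_cons, fourier_add, ih]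

lemma fourier_arg_sum {α : Type*} (s : Finset α) (n : ℤ) (b : α → AddCircle (1:ℝ)) :
    fourier n (∑ j ∈ s, b j) = ∏ j ∈ s, fourier n (b j) := by
  induction s using Finset.cons_induction with
  | empty => simp [fourier_eval_zero]
  | cons c s hc ih => rw [Finset.sum_cons, Finset.prod_cons, fourier_arg_add, ih]

lemma ee_act (x : Fin 2 → ℤ) (M : Matrix (Fin 2) (Fin 2) ℤ) (ξ : T2) :
    ee x (act M ξ) = ee (Mᵀ.mulVec x) ξ := by
  rw [ee, ee]
  simp_rw [act, fourier_arg_sum, fourier_zsmul, mulVec, dotProduct, transpose_apply,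
    fourier_exp_sum]
  rw [Finset.prod_comm]
  exact Finset.prod_congr rfl fun j _ => Finset.prod_congr rfl fun l _ => by rw [mul_comm]
lemma act_one (ξ : T2) : act 1 ξ = ξ := by
  funext i
  simp [act, Matrix.one_apply, ite_smul, Finset.sum_ite_eq]

lemma act_act (M N : Matrix (Fin 2) (Fin 2) ℤ) (ξ : T2) :
    act M (act N ξ) = act (M * N) ξ := by
  funext i
  simp only [act, Matrix.mul_apply, Finset.smul_sum, Finset.sum_smul, smul_smul]
  rw [Finset.sum_comm]

lemma continuous_act (M : Matrix (Fin 2) (Fin 2) ℤ) : Continuous (act M) := by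
  apply continuous_pi; intro i
  apply continuous_finset_sum; intro j _
  exact (continuous_zsmul (M i j)).comp (continuous_apply j)

/-- `act M` as an additive monoid hom. -/
def actHom (M : Matrix (Fin 2) (Fin 2) ℤ) : T2 →+ T2 where
  toFun := act M
  map_zero' := by funext i; simp [act]
  map_add' := fun ξ η => by funext i; simp [act, smul_add, Finset.sum_add_distrib]

lemma act_adj (M : Matrix (Fin 2) (Fin 2) ℤ) (h : M.det = 1) (ξ : T2) :
    act M (act M.adjugate ξ) = ξ := by
  rw [act_act, Matrix.mul_adjugate, h]
  simp [act_one]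

lemma adj_act (M : Matrix (Fin 2) (Fin 2) ℤ) (h : M.det = 1) (ξ : T2) :
    act M.adjugate (act M ξ) = ξ := by
  rw [act_act, Matrix.adjugate_mul, h]
  simp [act_one]

lemma act_surjective (M : Matrix (Fin 2) (Fin 2) ℤ) (h : M.det = 1) :
    Function.Surjective (act M) := fun ξ => ⟨act M.adjugate ξ, act_adj M h ξ⟩

lemma measurePreserving_act (M : Matrix (Fin 2) (Fin 2) ℤ) (h : M.det = 1) :
    MeasurePreserving (act M) (volume : Measure T2) volume := by
  have hc := continuous_act M
  refine ⟨hc.measurable, ?_⟩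
  have h1 : (Measure.map (act M) (volume : Measure T2)).IsAddHaarMeasure :=
    Measure.isAddHaarMeasure_map_of_isFiniteMeasure (volume : Measure T2) (actHom M) hc
      (act_surjective M h)
  have h2 : IsProbabilityMeasure (Measure.map (act M) (volume : Measure T2)) :=
    Measure.isProbabilityMeasure_map hc.measurable.aemeasurable
  exact Measure.isAddHaarMeasure_eq_of_isProbabilityMeasure _ _

/-- `act M` as a measurable equivalence. -/
def actEquiv (M : Matrix (Fin 2) (Fin 2) ℤ) (h : M.det = 1) : T2 ≃ᵐ T2 where
  toFun := act M
  invFun := act M.adjugate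
  left_inv := adj_act M h
  right_inv := act_adj M h
  measurable_toFun := (continuous_act M).measurable
  measurable_invFun := (continuous_act M.adjugate).measurable

lemma integral_act_comp {E : Type*} [NormedAddCommGroup E] [NormedSpace ℝ E]
    (M : Matrix (Fin 2) (Fin 2) ℤ) (h : M.det = 1) (f : T2 → E) :
    ∫ ξ, f (act M ξ) = ∫ ξ, f ξ :=
  (measurePreserving_act M h).integral_comp (actEquiv M h).measurableEmbedding f

lemma integrable_of_bdd {f : T2 → ℂ} (hm : Measurable f) {C : ℝ} (hb : ∀ ξ, ‖f ξ‖ ≤ C) :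
    Integrable f (volume : Measure T2) :=
  ⟨hm.aestronglyMeasurable, HasFiniteIntegral.of_bounded (ae_of_all _ hb)⟩

lemma integrable_ee (z : Fin 2 → ℤ) : Integrable (ee z) (volume : Measure T2) :=
  integrable_of_bdd (measurable_ee z) (C := 1) (fun ξ => le_of_eq (norm_ee z ξ))

/-- Trigonometric polynomials on the torus. -/
def IsTrig (f : T2 → ℂ) : Prop :=
  ∃ (s : Finset (Fin 2 → ℤ)) (c : (Fin 2 → ℤ) → ℂ),
    f = fun ξ => ∑ x ∈ s, c x * ee x ξ

lemma IsTrig.norm0 {f : T2 → ℂ} (h : IsTrig f) :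
    ∃ (s : Finset (Fin 2 → ℤ)) (c : (Fin 2 → ℤ) → ℂ),
      (0 : Fin 2 → ℤ) ∈ s ∧ f = fun ξ => ∑ x ∈ s, c x * ee x ξ := by
  obtain ⟨s, c, rfl⟩ := h
  refine ⟨insert 0 s, fun x => if x ∈ s then c x else 0, Finset.mem_insert_self _ _, ?_⟩
  funext ξ
  simp_rw [ite_mul, zero_mul, Finset.sum_ite_mem]
  rw [Finset.inter_eq_right.mpr (Finset.subset_insert _ _)]

lemma trig_measurable {s : Finset (Fin 2 → ℤ)} {c : (Fin 2 → ℤ) → ℂ} :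
    Measurable (fun ξ => ∑ x ∈ s, c x * ee x ξ) :=
  Finset.measurable_sum s fun x _ => measurable_const.mul (measurable_ee x)

lemma trig_bdd {s : Finset (Fin 2 → ℤ)} {c : (Fin 2 → ℤ) → ℂ} (ξ : T2) :
    ‖∑ x ∈ s, c x * ee x ξ‖ ≤ ∑ x ∈ s, ‖c x‖ := by
  refine (norm_sum_le _ _).trans (Finset.sum_le_sum fun x _ => ?_)
  rw [norm_mul, norm_ee, mul_one]

lemma trig_integrable {s : Finset (Fin 2 → ℤ)} {c : (Fin 2 → ℤ) → ℂ} :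
    Integrable (fun ξ => ∑ x ∈ s, c x * ee x ξ) (volume : Measure T2) :=
  integrable_of_bdd trig_measurable trig_bdd

lemma integral_trig {s : Finset (Fin 2 → ℤ)} {c : (Fin 2 → ℤ) → ℂ} (h0 : (0 : Fin 2 → ℤ) ∈ s) :
    ∫ ξ : T2, ∑ x ∈ s, c x * ee x ξ = c 0 := by
  rw [integral_finset_sum s fun x _ => (integrable_ee x).const_mul _]
  simp_rw [integral_const_mul, integral_ee, mul_ite, mul_one, mul_zero]
  rw [Finset.sum_ite_eq' s 0 c]
  simp [h0]
lemma tendsto_poly {k : ℕ} (T : Fin k → ℕ → Matrix (Fin 2) (Fin 2) ℤ)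
    (hfin : ∀ (x : Fin k → Fin 2 → ℤ) (y : Fin 2 → ℤ), ¬(x = 0 ∧ y = 0) →
        {n : ℕ | (∑ i, (T i n)ᵀ.mulVec (x i)) + y = 0}.Finite)
    (P : Fin k → T2 → ℂ) (Q : T2 → ℂ) (hP : ∀ i, IsTrig (P i)) (hQ : IsTrig Q) :
    Tendsto (fun n => ∫ ξ, (∏ i, P i (act (T i n) ξ)) * Q ξ) atTop
      (𝓝 ((∏ i, ∫ ξ, P i ξ) * ∫ ξ, Q ξ)) := by
  choose s c h0 hrep using fun i => (hP i).norm0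
  obtain ⟨t, d, ht0, rfl⟩ := hQ.norm0
  have key : ∀ n, ∫ ξ, (∏ i, P i (act (T i n) ξ)) * (∑ y ∈ t, d y * ee y ξ) =
      ∑ p ∈ Fintype.piFinset s, ∑ y ∈ t,
        ((∏ i, c i (p i)) * d y) *
          (if (∑ i, (T i n)ᵀ.mulVec (p i)) + y = 0 then (1:ℂ) else 0) := by
    intro n
    have hpt : ∀ ξ : T2, (∏ i, P i (act (T i n) ξ)) * (∑ y ∈ t, d y * ee y ξ) =
        ∑ p ∈ Fintype.piFinset s, ∑ y ∈ t,
          ((∏ i, c i (p i)) * d y) * ee ((∑ i, (T i n)ᵀ.mulVec (p i)) + y) ξ := by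
      intro ξ
      simp only [hrep, ee_act]
      rw [Finset.prod_univ_sum, Finset.sum_mul_sum]
      refine Finset.sum_congr rfl fun p _ => Finset.sum_congr rfl fun y _ => ?_
      rw [Finset.prod_mul_distrib, ← ee_sum, ee_add]
      ring
    simp_rw [hpt]
    rw [integral_finset_sum _ (fun p _ =>
      integrable_finset_sum _ (fun y _ => (integrable_ee _).const_mul _))]
    refine Finset.sum_congr rfl fun p _ => ?_
    rw [integral_finset_sum _ (fun y _ => (integrable_ee _).const_mul _)]
    refine Finset.sum_congr rfl fun y _ => ?_
    rw [integral_const_mul, integral_ee]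
  have hval : (∑ p ∈ Fintype.piFinset s, ∑ y ∈ t,
      (if p = 0 ∧ y = 0 then (∏ i, c i (p i)) * d y else 0)) = (∏ i, c i 0) * d 0 := by
    have h1 : ∀ p ∈ Fintype.piFinset s, (∑ y ∈ t,
        (if p = 0 ∧ y = 0 then (∏ i, c i (p i)) * d y else 0))
        = if p = 0 then (∏ i, c i (p i)) * d 0 else 0 := by
      intro p _
      by_cases hp : p = 0
      · simp only [hp, true_and, if_true]
        rw [Finset.sum_ite_eq' t 0 (fun y => (∏ i, c i ((0 : Fin k → Fin 2 → ℤ) i)) * d y),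
          if_pos ht0]
      · simp [hp]
    rw [Finset.sum_congr rfl h1,
      Finset.sum_ite_eq' (Fintype.piFinset s) (0 : Fin k → Fin 2 → ℤ) (fun q => (∏ i, c i (q i)) * d 0),
      if_pos (Fintype.mem_piFinset.mpr (fun i => by simpa using h0 i))]
    simp
  have htarget : (∏ i, ∫ ξ, P i ξ) * (∫ ξ : T2, ∑ y ∈ t, d y * ee y ξ)
      = (∏ i, c i 0) * d 0 := by
    rw [integral_trig ht0]
    congr 1
    exact Finset.prod_congr rfl fun i _ => by rw [hrep i, integral_trig (h0 i)]
  rw [htarget, ← hval]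
  refine Tendsto.congr (fun n => (key n).symm) ?_
  refine tendsto_finset_sum _ fun p _ => tendsto_finset_sum _ fun y _ => ?_
  by_cases hpy : p = 0 ∧ y = 0
  · obtain ⟨hp, hy⟩ := hpy
    subst hp; subst hy
    simp only [Pi.zero_apply, Matrix.mulVec_zero, Finset.sum_const, smul_zero, add_zero,
      if_pos rfl, mul_one, true_and, if_true]
    exact tendsto_const_nhds
  · rw [if_neg hpy]
    have hev : ∀ᶠ n in atTop, n ∉ {n : ℕ | (∑ i, (T i n)ᵀ.mulVec (p i)) + y = 0} := by
      rw [← Nat.cofinite_eq_atTop]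
      exact (hfin p y hpy).eventually_cofinite_notMem
    refine Tendsto.congr' (hev.mono fun n hn => ?_) tendsto_const_nhds
    simp only [Set.mem_setOf_eq] at hn
    simp only [if_neg hn, mul_zero]
lemma ee_neg (x : Fin 2 → ℤ) (ξ : T2) : ee (-x) ξ = starRingEnd ℂ (ee x ξ) := by
  rw [ee, ee, map_prod]
  exact Finset.prod_congr rfl fun j _ => by rw [Pi.neg_apply, fourier_neg]

lemma IsTrig_of_sum {β : Type} (F : Finset β) (γ : β → ℂ) (w : β → (Fin 2 → ℤ)) :
    IsTrig (fun ξ => ∑ q ∈ F, γ q * ee (w q) ξ) := by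
  classical
  refine ⟨F.image w, fun z => ∑ q ∈ F.filter (fun q => w q = z), γ q, ?_⟩
  funext ξ
  rw [← Finset.sum_fiberwise_of_maps_to (fun q hq => Finset.mem_image_of_mem w hq)
    (fun q => γ q * ee (w q) ξ)]
  refine Finset.sum_congr rfl fun z _ => ?_
  rw [Finset.sum_mul]
  exact Finset.sum_congr rfl fun q hq => by rw [(Finset.mem_filter.mp hq).2]

lemma IsTrig.add {f g : T2 → ℂ} (hf : IsTrig f) (hg : IsTrig g) : IsTrig (f + g) := by
  obtain ⟨s₁, c₁, rfl⟩ := hf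
  obtain ⟨s₂, c₂, rfl⟩ := hg
  have := IsTrig_of_sum (s₁.disjSum s₂) (Sum.elim c₁ c₂) (Sum.elim id id)
  convert this using 1
  funext ξ
  simp [Finset.sum_disjSum]

lemma IsTrig.mul {f g : T2 → ℂ} (hf : IsTrig f) (hg : IsTrig g) : IsTrig (f * g) := by
  obtain ⟨s₁, c₁, rfl⟩ := hf
  obtain ⟨s₂, c₂, rfl⟩ := hg
  have := IsTrig_of_sum (s₁ ×ˢ s₂) (fun q => c₁ q.1 * c₂ q.2) (fun q => q.1 + q.2)
  convert this using 1
  funext ξ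
  rw [Pi.mul_apply, Finset.sum_mul_sum, Finset.sum_product]
  refine Finset.sum_congr rfl fun x _ => Finset.sum_congr rfl fun y _ => ?_
  rw [ee_add]
  ring

lemma IsTrig.star {f : T2 → ℂ} (hf : IsTrig f) : IsTrig (star f) := by
  obtain ⟨s, c, rfl⟩ := hf
  have := IsTrig_of_sum s (fun x => starRingEnd ℂ (c x)) (fun x => -x)
  convert this using 1
  funext ξ
  simp only [Pi.star_apply, ee_neg]
  rw [star_sum]
  exact Finset.sum_congr rfl fun x _ => by simp [mul_comm]

lemma IsTrig.const (r : ℂ) : IsTrig (fun _ => r) := by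
  have := IsTrig_of_sum {(0 : Fin 2 → ℤ)} (fun _ => r) (fun _ => 0)
  convert this using 1
  funext ξ
  simp [ee_zero]

/-- characters as continuous maps -/
def eeC (x : Fin 2 → ℤ) : C(T2, ℂ) := ⟨ee x, continuous_ee x⟩

lemma trig_dense_unif (g : C(T2, ℂ)) {ε : ℝ} (hε : 0 < ε) :
    ∃ P : T2 → ℂ, IsTrig P ∧ ∀ ξ, ‖g ξ - P ξ‖ ≤ ε := by
  set A : StarSubalgebra ℂ C(T2, ℂ) := StarAlgebra.adjoin ℂ (Set.range eeC) with hA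
  have hsep : A.SeparatesPoints := by
    intro ξ η hne
    have : ∃ j, ξ j ≠ η j := by
      by_contra h
      push_neg at h
      exact hne (funext h)
    obtain ⟨j, hj⟩ := this
    refine ⟨eeC (Pi.single j 1), ⟨eeC (Pi.single j 1),
      StarAlgebra.subset_adjoin ℂ _ ⟨Pi.single j 1, rfl⟩, rfl⟩, ?_⟩
    have hval : ∀ ζ : T2, eeC (Pi.single j 1) ζ = (AddCircle.toCircle (ζ j) : ℂ) := by
      intro ζ
      show ee (Pi.single j 1) ζ = _
      rw [ee, Finset.prod_eq_single_of_mem j (Finset.mem_univ j)]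
      · rw [Pi.single_eq_same, ← fourier_one]
      · intro l _ hl
        rw [Pi.single_eq_of_ne hl, fourier_zero]
    rw [hval, hval]
    intro h
    exact hj (AddCircle.injective_toCircle one_ne_zero (Subtype.coe_injective h))
  have hdense := ContinuousMap.starSubalgebra_topologicalClosure_eq_top_of_separatesPoints A hsep
  have hmem : g ∈ A.topologicalClosure := by rw [hdense]; trivial
  have hclos : g ∈ closure (A : Set C(T2, ℂ)) := hmem
  rw [Metric.mem_closure_iff] at hclos
  obtain ⟨P, hPA, hPd⟩ := hclos ε hε
  refine ⟨P, ?_, fun ξ => ?_⟩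
  · -- every element of A is trig
    have : ∀ a : C(T2, ℂ), a ∈ A → IsTrig (a : T2 → ℂ) := by
      intro a ha
      induction ha using StarAlgebra.adjoin_induction with
      | mem x hx =>
        obtain ⟨z, rfl⟩ := hx
        have := IsTrig_of_sum {z} (fun _ => 1) (fun _ => z)
        convert this using 1
        funext ξ
        simp [eeC]
      | algebraMap r => exact IsTrig.const r
      | add x y hx hy ihx ihy => exact ihx.add ihy
      | mul x y hx hy ihx ihy => exact ihx.mul ihy
      | star x hx ihx => exact ihx.star
    exact this P hPA
  · calc ‖g ξ - P ξ‖ = dist (g ξ) (P ξ) := by rw [dist_eq_norm]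
      _ ≤ dist g P := ContinuousMap.dist_apply_le_dist ξ
      _ ≤ ε := le_of_lt hPd
lemma IsTrig.measurable {P : T2 → ℂ} (h : IsTrig P) : Measurable P := by
  obtain ⟨s, c, rfl⟩ := h; exact trig_measurable

lemma IsTrig.bdd {P : T2 → ℂ} (h : IsTrig P) : ∃ C, ∀ ξ, ‖P ξ‖ ≤ C := by
  obtain ⟨s, c, rfl⟩ := h; exact ⟨_, trig_bdd⟩

lemma IsTrig.integrable {P : T2 → ℂ} (h : IsTrig P) : Integrable P (volume : Measure T2) := by
  obtain ⟨s, c, rfl⟩ := h; exact trig_integrable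

lemma exists_trig_close {f : T2 → ℂ} (hm : Measurable f) {C : ℝ} (hb : ∀ ξ, ‖f ξ‖ ≤ C)
    {ε : ℝ} (hε : 0 < ε) :
    ∃ P : T2 → ℂ, IsTrig P ∧ ∫ ξ, ‖f ξ - P ξ‖ ≤ ε := by
  have hfi : Integrable f (volume : Measure T2) := integrable_of_bdd hm hb
  have hmem : MemLp f (ENNReal.ofReal 1) (volume : Measure T2) := by
    rw [ENNReal.ofReal_one]
    exact MemLp.of_bound hm.aestronglyMeasurable C (ae_of_all _ hb)
  obtain ⟨g, hg1, -⟩ := hmem.exists_boundedContinuous_integral_rpow_sub_le one_pos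
    (half_pos hε)
  simp_rw [Real.rpow_one] at hg1
  obtain ⟨P, hP, hP2⟩ := trig_dense_unif g.toContinuousMap (half_pos hε)
  have hgi : Integrable (fun ξ => (g ξ : ℂ)) (volume : Measure T2) :=
    integrable_of_bdd g.continuous.measurable (fun ξ => g.norm_coe_le_norm ξ)
  refine ⟨P, hP, ?_⟩
  have h1 : Integrable (fun ξ => ‖f ξ - P ξ‖) (volume : Measure T2) := (hfi.sub hP.integrable).norm
  have h2 : Integrable (fun ξ => ‖f ξ - g ξ‖) (volume : Measure T2) := (hfi.sub hgi).norm
  have h3 : Integrable (fun ξ => ‖(g ξ : ℂ) - P ξ‖) (volume : Measure T2) :=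
    (hgi.sub hP.integrable).norm
  calc ∫ ξ, ‖f ξ - P ξ‖ ≤ ∫ ξ, (‖f ξ - (g ξ : ℂ)‖ + ‖(g ξ : ℂ) - P ξ‖) := by
        refine integral_mono h1 (h2.add h3) fun ξ => ?_
        simpa [dist_eq_norm] using dist_triangle (f ξ) (g ξ : ℂ) (P ξ)
    _ = (∫ ξ, ‖f ξ - (g ξ : ℂ)‖) + ∫ ξ, ‖(g ξ : ℂ) - P ξ‖ := integral_add h2 h3
    _ ≤ ε / 2 + ε / 2 := by
        refine add_le_add hg1 ?_
        calc (∫ ξ, ‖(g ξ : ℂ) - P ξ‖) ≤ ∫ _ξ : T2, (ε / 2) :=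
            integral_mono h3 (integrable_const _) fun ξ => hP2 ξ
          _ = ε / 2 := by simp
    _ = ε := add_halves ε
lemma norm_integral_le_const {f : T2 → ℂ} {C : ℝ} (hb : ∀ ξ, ‖f ξ‖ ≤ C) :
    ‖∫ ξ, f ξ‖ ≤ C := by
  have := norm_integral_le_of_norm_le_const (μ := (volume : Measure T2)) (C := C)
    (ae_of_all _ hb)
  simpa using this

lemma key_bound {u v h : T2 → ℂ} (hu : Measurable u) (hv : Measurable v) (hh : Measurable h)
    {Cu Cv D : ℝ} (bu : ∀ ξ, ‖u ξ‖ ≤ Cu) (bv : ∀ ξ, ‖v ξ‖ ≤ Cv) (bh : ∀ ξ, ‖h ξ‖ ≤ D) :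
    ‖(∫ ξ, u ξ * h ξ) - ∫ ξ, v ξ * h ξ‖ ≤ D * ∫ ξ, ‖u ξ - v ξ‖ := by
  have hD : 0 ≤ D := le_trans (norm_nonneg _) (bh 0)
  have hCu : 0 ≤ Cu := le_trans (norm_nonneg _) (bu 0)
  have hCv : 0 ≤ Cv := le_trans (norm_nonneg _) (bv 0)
  have i1 : Integrable (fun ξ => u ξ * h ξ) (volume : Measure T2) :=
    integrable_of_bdd (hu.mul hh) (C := Cu * D)
      (fun ξ => by rw [norm_mul]; exact mul_le_mul (bu ξ) (bh ξ) (norm_nonneg _) hCu)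
  have i2 : Integrable (fun ξ => v ξ * h ξ) (volume : Measure T2) :=
    integrable_of_bdd (hv.mul hh) (C := Cv * D)
      (fun ξ => by rw [norm_mul]; exact mul_le_mul (bv ξ) (bh ξ) (norm_nonneg _) hCv)
  have i3 : Integrable (fun ξ => ‖u ξ - v ξ‖) (volume : Measure T2) :=
    ((integrable_of_bdd hu bu).sub (integrable_of_bdd hv bv)).norm
  rw [← integral_sub i1 i2]
  calc ‖∫ ξ, (u ξ * h ξ - v ξ * h ξ)‖ ≤ ∫ ξ, ‖u ξ * h ξ - v ξ * h ξ‖ :=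
        norm_integral_le_integral_norm _
    _ ≤ ∫ ξ, D * ‖u ξ - v ξ‖ := by
        refine integral_mono (i1.sub i2).norm (i3.const_mul D) fun ξ => ?_
        have : u ξ * h ξ - v ξ * h ξ = (u ξ - v ξ) * h ξ := by ring
        rw [this, norm_mul, mul_comm]
        exact mul_le_mul_of_nonneg_right (bh ξ) (norm_nonneg _)
    _ = D * ∫ ξ, ‖u ξ - v ξ‖ := integral_const_mul D _

lemma tendsto_of_approx {F : ℕ → ℂ} {L : ℂ}
    (h : ∀ ε : ℝ, 0 < ε → ∃ (G : ℕ → ℂ) (M : ℂ), Tendsto G atTop (𝓝 M) ∧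
      (∀ n, ‖F n - G n‖ ≤ ε) ∧ ‖L - M‖ ≤ ε) :
    Tendsto F atTop (𝓝 L) := by
  rw [Metric.tendsto_atTop]
  intro ε hε
  obtain ⟨G, M, hG, h1, h2⟩ := h (ε / 4) (by linarith)
  obtain ⟨N, hN⟩ := Metric.tendsto_atTop.mp hG (ε / 4) (by linarith)
  refine ⟨N, fun n hn => ?_⟩
  have h3 := hN n hn
  have d1 : dist (F n) (G n) ≤ ε / 4 := by rw [dist_eq_norm]; exact h1 n
  have d2 : dist M L ≤ ε / 4 := by rw [dist_comm, dist_eq_norm]; exact h2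
  calc dist (F n) L ≤ dist (F n) (G n) + dist (G n) M + dist M L := dist_triangle4 _ _ _ _
    _ < ε := by linarith
lemma DdeltaLe {D ε : ℝ} (hD : 0 ≤ D) (hε : 0 < ε) : D * (ε / (D + 1)) ≤ ε := by
  have h1 : (0:ℝ) < D + 1 := by linarith
  calc D * (ε / (D + 1)) ≤ (D + 1) * (ε / (D + 1)) := by
        refine mul_le_mul_of_nonneg_right (by linarith) (by positivity)
    _ = ε := by field_simp

lemma mixing_partial {k : ℕ} (T : Fin k → ℕ → Matrix (Fin 2) (Fin 2) ℤ)
    (hT : ∀ i n, (T i n).det = 1)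
    (hfin : ∀ (x : Fin k → Fin 2 → ℤ) (y : Fin 2 → ℤ), ¬(x = 0 ∧ y = 0) →
        {n : ℕ | (∑ i, (T i n)ᵀ.mulVec (x i)) + y = 0}.Finite) :
    ∀ (j : ℕ) (f : Fin k → T2 → ℂ) (g : T2 → ℂ),
      (∀ i, Measurable (f i)) → Measurable g →
      (∀ i, ∃ C, ∀ ξ, ‖f i ξ‖ ≤ C) → (∃ C, ∀ ξ, ‖g ξ‖ ≤ C) →
      (∀ i : Fin k, j ≤ (i : ℕ) → IsTrig (f i)) →
      Tendsto (fun n => ∫ ξ, (∏ i, f i (act (T i n) ξ)) * g ξ) atTop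
        (𝓝 ((∏ i, ∫ ξ, f i ξ) * ∫ ξ, g ξ)) := by
  intro j
  induction j with
  | zero =>
    intro f g hfm hgm hfb hgb htrig
    -- all f i are trig; approximate g
    choose C hC using hfb
    have hC0 : ∀ i, 0 ≤ C i := fun i => le_trans (norm_nonneg _) (hC i 0)
    set D : ℝ := ∏ i, C i with hD
    have hD0 : 0 ≤ D := Finset.prod_nonneg fun i _ => hC0 i
    apply tendsto_of_approx
    intro ε hε
    obtain ⟨Q, hQ, hQc⟩ := exists_trig_close hgm (hgb.choose_spec) (div_pos hε (by linarith : (0:ℝ) < D + 1))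
    refine ⟨fun n => ∫ ξ, (∏ i, f i (act (T i n) ξ)) * Q ξ, (∏ i, ∫ ξ, f i ξ) * ∫ ξ, Q ξ,
      tendsto_poly T hfin f Q (fun i => htrig i (Nat.zero_le _)) hQ, fun n => ?_, ?_⟩
    · -- uniform closeness
      have hh : Measurable (fun ξ => ∏ i, f i (act (T i n) ξ)) :=
        Finset.measurable_prod _ fun i _ => (hfm i).comp (continuous_act _).measurable
      have bh : ∀ ξ, ‖∏ i, f i (act (T i n) ξ)‖ ≤ D := fun ξ => by
        rw [norm_prod]
        exact Finset.prod_le_prod (fun i _ => norm_nonneg _) (fun i _ => hC i _)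
      have e1 : ∀ (u : T2 → ℂ), (∫ ξ, (∏ i, f i (act (T i n) ξ)) * u ξ)
          = ∫ ξ, u ξ * (∏ i, f i (act (T i n) ξ)) := by
        intro u; congr 1; funext ξ; ring
      beta_reduce
      rw [e1 g, e1 Q]
      refine le_trans (key_bound hgm hQ.measurable hh hgb.choose_spec
        hQ.bdd.choose_spec bh) ?_
      calc D * ∫ ξ, ‖g ξ - Q ξ‖ ≤ D * (ε / (D + 1)) :=
            mul_le_mul_of_nonneg_left hQc hD0
        _ ≤ ε := DdeltaLe hD0 hε
    · -- limit closeness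
      have hR : ‖∏ i, ∫ ξ, f i ξ‖ ≤ D := by
        rw [norm_prod]
        exact Finset.prod_le_prod (fun i _ => norm_nonneg _)
          (fun i _ => norm_integral_le_const (hC i))
      have hgint : Integrable g (volume : Measure T2) := integrable_of_bdd hgm hgb.choose_spec
      have e2 : (∏ i, ∫ ξ, f i ξ) * (∫ ξ, g ξ) - (∏ i, ∫ ξ, f i ξ) * ∫ ξ, Q ξ
          = (∏ i, ∫ ξ, f i ξ) * ∫ ξ, (g ξ - Q ξ) := by
        rw [integral_sub hgint hQ.integrable]; ring
      rw [e2, norm_mul]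
      calc ‖∏ i, ∫ ξ, f i ξ‖ * ‖∫ ξ, (g ξ - Q ξ)‖ ≤ D * ∫ ξ, ‖g ξ - Q ξ‖ := by
            refine mul_le_mul hR (norm_integral_le_integral_norm _) (norm_nonneg _) hD0
        _ ≤ D * (ε / (D + 1)) := mul_le_mul_of_nonneg_left hQc hD0
        _ ≤ ε := DdeltaLe hD0 hε
  | succ j IH =>
    intro f g hfm hgm hfb hgb htrig
    by_cases hjk : j < k
    case neg =>
      exact IH f g hfm hgm hfb hgb (fun i hi => absurd (lt_of_le_of_lt hi i.isLt) (by omega))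
    case pos =>
    set jj : Fin k := ⟨j, hjk⟩ with hjj
    choose C hC using hfb
    obtain ⟨Cg, hCg⟩ := hgb
    have hC0 : ∀ i, 0 ≤ C i := fun i => le_trans (norm_nonneg _) (hC i 0)
    have hCg0 : 0 ≤ Cg := le_trans (norm_nonneg _) (hCg 0)
    set D : ℝ := (∏ i ∈ Finset.univ.erase jj, C i) * Cg with hD
    have hD0 : 0 ≤ D := mul_nonneg (Finset.prod_nonneg fun i _ => hC0 i) hCg0
    apply tendsto_of_approx
    intro ε hε
    have hδ : 0 < ε / (D + 1) := div_pos hε (by linarith)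
    obtain ⟨P, hP, hPc⟩ := exists_trig_close (hfm jj) (hC jj) hδ
    obtain ⟨CP, hCP⟩ := hP.bdd
    set f' : Fin k → T2 → ℂ := Function.update f jj P with hf'
    have hf'm : ∀ i, Measurable (f' i) := by
      intro i
      rcases eq_or_ne i jj with rfl | h
      · rw [hf', Function.update_self]; exact hP.measurable
      · rw [hf', Function.update_of_ne h]; exact hfm i
    have hf'b : ∀ i, ∃ C, ∀ ξ, ‖f' i ξ‖ ≤ C := by
      intro i
      rcases eq_or_ne i jj with rfl | h
      · rw [hf', Function.update_self]; exact ⟨CP, hCP⟩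
      · rw [hf', Function.update_of_ne h]; exact ⟨C i, hC i⟩
    have hf't : ∀ i : Fin k, j ≤ (i : ℕ) → IsTrig (f' i) := by
      intro i hi
      rcases eq_or_ne i jj with rfl | h
      · rw [hf', Function.update_self]; exact hP
      · rw [hf', Function.update_of_ne h]
        refine htrig i ?_
        have : (i : ℕ) ≠ j := fun hc => h (Fin.ext hc)
        omega
    refine ⟨fun n => ∫ ξ, (∏ i, f' i (act (T i n) ξ)) * g ξ, (∏ i, ∫ ξ, f' i ξ) * ∫ ξ, g ξ,
      IH f' g hf'm hgm hf'b ⟨Cg, hCg⟩ hf't, fun n => ?_, ?_⟩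
    · -- uniform closeness in n
      set hh : T2 → ℂ := fun ξ => (∏ i ∈ Finset.univ.erase jj, f i (act (T i n) ξ)) * g ξ with hhh
      have hhm : Measurable hh :=
        (Finset.measurable_prod _ fun i _ => (hfm i).comp (continuous_act _).measurable).mul hgm
      have bh : ∀ ξ, ‖hh ξ‖ ≤ D := by
        intro ξ
        rw [hhh]
        simp only [norm_mul, norm_prod]
        exact mul_le_mul (Finset.prod_le_prod (fun i _ => norm_nonneg _) (fun i _ => hC i _))
          (hCg ξ) (norm_nonneg _) (Finset.prod_nonneg fun i _ => hC0 i)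
      have e1 : (∫ ξ, (∏ i, f i (act (T i n) ξ)) * g ξ)
          = ∫ ξ, f jj (act (T jj n) ξ) * hh ξ := by
        congr 1; funext ξ
        rw [hhh, ← Finset.mul_prod_erase Finset.univ _ (Finset.mem_univ jj), mul_assoc]
      have e2 : (∫ ξ, (∏ i, f' i (act (T i n) ξ)) * g ξ)
          = ∫ ξ, P (act (T jj n) ξ) * hh ξ := by
        congr 1; funext ξ
        rw [hhh, ← Finset.mul_prod_erase Finset.univ _ (Finset.mem_univ jj), mul_assoc,
          hf', Function.update_self]
        congr 2
        exact Finset.prod_congr rfl fun i hi =>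
          by rw [Function.update_of_ne (Finset.ne_of_mem_erase hi)]
      beta_reduce
      rw [e1, e2]
      have hkb := key_bound ((hfm jj).comp (continuous_act _).measurable)
        (hP.measurable.comp (continuous_act _).measurable) hhm
        (fun ξ => hC jj (act (T jj n) ξ)) (fun ξ => hCP (act (T jj n) ξ)) bh
      refine le_trans hkb ?_
      have e3 : (∫ ξ, ‖(f jj ∘ act (T jj n)) ξ - (P ∘ act (T jj n)) ξ‖) = ∫ ξ, ‖f jj ξ - P ξ‖ :=
        integral_act_comp (T jj n) (hT jj n) (fun ζ => ‖f jj ζ - P ζ‖)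
      rw [e3]
      calc D * ∫ ξ, ‖f jj ξ - P ξ‖ ≤ D * (ε / (D + 1)) := mul_le_mul_of_nonneg_left hPc hD0
        _ ≤ ε := DdeltaLe hD0 hε
    · -- limit closeness
      set R : ℂ := (∏ i ∈ Finset.univ.erase jj, ∫ ξ, f i ξ) * ∫ ξ, g ξ with hR
      have bR : ‖R‖ ≤ D := by
        rw [hR]
        simp only [norm_mul, norm_prod]
        exact mul_le_mul
          (Finset.prod_le_prod (fun i _ => norm_nonneg _)
            (fun i _ => norm_integral_le_const (hC i)))
          (norm_integral_le_const hCg) (norm_nonneg _)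
          (Finset.prod_nonneg fun i _ => hC0 i)
      have e4 : (∏ i, ∫ ξ, f i ξ) * (∫ ξ, g ξ) = (∫ ξ, f jj ξ) * R := by
        rw [hR, ← Finset.mul_prod_erase Finset.univ _ (Finset.mem_univ jj), mul_assoc]
      have e5 : (∏ i, ∫ ξ, f' i ξ) * (∫ ξ, g ξ) = (∫ ξ, P ξ) * R := by
        rw [hR, ← Finset.mul_prod_erase Finset.univ _ (Finset.mem_univ jj), mul_assoc]
        congr 2
        · rw [hf', Function.update_self]
        · exact Finset.prod_congr rfl fun i hi =>
            by rw [hf', Function.update_of_ne (Finset.ne_of_mem_erase hi)]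
      rw [e4, e5, ← sub_mul, norm_mul]
      have e6 : (∫ ξ, f jj ξ) - (∫ ξ, P ξ) = ∫ ξ, (f jj ξ - P ξ) :=
        (integral_sub (integrable_of_bdd (hfm jj) (hC jj)) hP.integrable).symm
      rw [e6]
      calc ‖∫ ξ, (f jj ξ - P ξ)‖ * ‖R‖ ≤ (∫ ξ, ‖f jj ξ - P ξ‖) * D :=
            mul_le_mul (norm_integral_le_integral_norm _) bR (norm_nonneg _)
              (integral_nonneg fun ξ => norm_nonneg _)
        _ ≤ (ε / (D + 1)) * D := mul_le_mul_of_nonneg_right hPc hD0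
        _ = D * (ε / (D + 1)) := mul_comm _ _
        _ ≤ ε := DdeltaLe hD0 hε

theorem stmt1 {k : ℕ} (T : Fin k → ℕ → Matrix (Fin 2) (Fin 2) ℤ)
    (hT : ∀ i n, (T i n).det = 1) :
    JointMeasureMixing T ↔
      ∀ (x : Fin k → Fin 2 → ℤ) (y : Fin 2 → ℤ), ¬(x = 0 ∧ y = 0) →
        {n : ℕ | (∑ i, (T i n)ᵀ.mulVec (x i)) + y = 0}.Finite := by
  constructor
  · intro hmix x y hxy
    by_contra hfin
    have hinf : {n : ℕ | (∑ i, (T i n)ᵀ.mulVec (x i)) + y = 0}.Infinite := hfin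
    have hmix' := hmix (fun i => ee (x i)) (ee y) (fun i => measurable_ee _) (measurable_ee _)
      (fun i => ⟨1, fun ξ => le_of_eq (norm_ee _ _)⟩) ⟨1, fun ξ => le_of_eq (norm_ee _ _)⟩
    have hF : ∀ n, (∫ ξ, (∏ i, ee (x i) (act (T i n) ξ)) * ee y ξ)
        = if (∑ i, (T i n)ᵀ.mulVec (x i)) + y = 0 then (1:ℂ) else 0 := by
      intro n
      have hpt : ∀ ξ, (∏ i, ee (x i) (act (T i n) ξ)) * ee y ξ
          = ee ((∑ i, (T i n)ᵀ.mulVec (x i)) + y) ξ := by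
        intro ξ
        rw [ee_add, ee_sum]
        congr 1
        exact Finset.prod_congr rfl fun i _ => ee_act _ _ _
      simp_rw [hpt]
      exact integral_ee _
    have hL : ((∏ i, ∫ ξ, ee (x i) ξ) * ∫ ξ, ee y ξ) = 0 := by
      simp_rw [integral_ee]
      rcases not_and_or.mp hxy with hx | hy
      · have : ∃ i, x i ≠ 0 := by
          by_contra h; push_neg at h; exact hx (funext h)
        obtain ⟨i, hi⟩ := this
        rw [Finset.prod_eq_zero (Finset.mem_univ i) (show (if x i = 0 then (1:ℂ) else 0) = 0 from if_neg hi), zero_mul]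
      · rw [if_neg hy, mul_zero]
    rw [hL] at hmix'
    obtain ⟨N, hN⟩ := Metric.tendsto_atTop.mp hmix' (1/2) (by norm_num)
    obtain ⟨n, hnS, hn⟩ := hinf.exists_gt N
    have h1 := hN n hn.le
    have hnS' : (∑ i, (T i n)ᵀ.mulVec (x i)) + y = 0 := hnS
    rw [hF n, if_pos hnS'] at h1
    norm_num at h1
  · intro hfin f g hfm hgm hfb hgb
    exact mixing_partial T hT hfin k f g hfm hgm hfb hgb
      (fun i hi => absurd i.isLt (not_lt.mpr hi))
end
end

section
/- Let (T_n) be a sequence in SL(2,ℤ) with ‖T_n‖ → ∞, where ‖·‖ is the max-norm on 2×2 real matrices, and let 𝒟 denote the set of limit points of T_n/‖T_n‖ in M(2,ℝ). Then (T_n) is not mixing on 𝕋² if and only if there exist matrices A, B with rational entries such that B ∈ 𝒟 and T_n = A + ‖T_n‖·B for infinitely many n. -/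
open MeasureTheory Matrix Filter Topology

noncomputable section

/-- A sequence of integer matrices is mixing on 𝕋² (Fourier-analytic characterization). -/
def MixingSeq (T : ℕ → Matrix (Fin 2) (Fin 2) ℤ) : Prop :=
  ∀ x y : Fin 2 → ℤ, ¬(x = 0 ∧ y = 0) → {n : ℕ | (T n)ᵀ.mulVec x + y = 0}.Finite

/-- The max-norm on 2×2 real matrices. -/
def mnorm (M : Matrix (Fin 2) (Fin 2) ℝ) : ℝ :=
  max (max |M 0 0| |M 0 1|) (max |M 1 0| |M 1 1|)

/-- A real matrix has rational entries. -/
def RationalEntries (M : Matrix (Fin 2) (Fin 2) ℝ) : Prop :=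
  ∀ i j, ∃ q : ℚ, M i j = (q : ℝ)

lemma qnum (q : ℚ) : (q.num : ℚ) = q * q.den := by
  have hden : (q.den : ℚ) ≠ 0 := by exact_mod_cast q.den_ne_zero
  calc (q.num : ℚ) = (q.num : ℚ)/q.den * q.den := (div_mul_cancel₀ _ hden).symm
    _ = q * q.den := by rw [Rat.num_div_den]

lemma ker2 (a b c d : ℚ) (h : a*d - b*c = 0) :
    ∃ v0 v1 : ℚ, ¬(v0 = 0 ∧ v1 = 0) ∧ v0*a + v1*c = 0 ∧ v0*b + v1*d = 0 := by
  by_cases hc : c ≠ 0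
  · exact ⟨c, -a, fun ⟨h1,_⟩ => hc h1, by ring, by linear_combination -h⟩
  · push_neg at hc
    by_cases hd : d ≠ 0
    · exact ⟨d, -b, fun ⟨h1,_⟩ => hd h1, by linear_combination h, by ring⟩
    · push_neg at hd
      exact ⟨0, 1, fun ⟨_,h2⟩ => one_ne_zero h2, by simp [hc], by simp [hd]⟩

lemma mapClusterPt_eq_of_tendsto {α : Type*} [TopologicalSpace α] [T2Space α]
    {f : ℕ → α} {a b : α} (h : MapClusterPt a atTop f) (h2 : Tendsto f atTop (𝓝 b)) :
    a = b :=
  eq_of_nhds_neBot (h.clusterPt.mono h2)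

lemma cont_entry (i j : Fin 2) : Continuous fun M : Matrix (Fin 2) (Fin 2) ℝ => M i j :=
  (continuous_apply j).comp (continuous_apply i)

theorem stmt2' (T : ℕ → Matrix (Fin 2) (Fin 2) ℤ) (hdet : ∀ n, (T n).det = 1)
    (hnorm : Tendsto (fun n => mnorm ((T n).map (Int.cast : ℤ → ℝ))) atTop atTop)
    (A B : Matrix (Fin 2) (Fin 2) ℝ) (hA : RationalEntries A) (hB : RationalEntries B)
    (hclus : MapClusterPt B atTop
          (fun n => (mnorm ((T n).map (Int.cast : ℤ → ℝ)))⁻¹ • (T n).map (Int.cast : ℤ → ℝ)))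
    (hinf : {n : ℕ | (T n).map (Int.cast : ℤ → ℝ)
            = A + mnorm ((T n).map (Int.cast : ℤ → ℝ)) • B}.Infinite) :
    ¬ MixingSeq T := by
  intro hmix
  classical
  set Tr : ℕ → Matrix (Fin 2) (Fin 2) ℝ := fun n => (T n).map (Int.cast : ℤ → ℝ) with hTrdef
  set N : ℕ → ℝ := fun n => mnorm (Tr n) with hNdef
  -- determinant of B is zero
  have hgdet : Continuous fun M : Matrix (Fin 2) (Fin 2) ℝ => M 0 0 * M 1 1 - M 0 1 * M 1 0 :=
    ((cont_entry 0 0).mul (cont_entry 1 1)).sub ((cont_entry 0 1).mul (cont_entry 1 0))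
  have hTr1 : ∀ n, Tr n 0 0 * Tr n 1 1 - Tr n 0 1 * Tr n 1 0 = 1 := by
    intro n
    have h := hdet n
    rw [Matrix.det_fin_two] at h
    have h2 := congrArg (Int.cast : ℤ → ℝ) h
    push_cast at h2
    simpa [hTrdef, Matrix.map_apply] using h2
  have htend0 : Tendsto (fun n =>
      (fun M : Matrix (Fin 2) (Fin 2) ℝ => M 0 0 * M 1 1 - M 0 1 * M 1 0) ((N n)⁻¹ • Tr n))
      atTop (𝓝 0) := by
    have h1 : Tendsto (fun n => (N n)⁻¹) atTop (𝓝 0) := tendsto_inv_atTop_zero.comp hnorm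
    have h2 : Tendsto (fun n => (N n)⁻¹ * (N n)⁻¹) atTop (𝓝 0) := by
      simpa using h1.mul h1
    apply h2.congr
    intro n
    simp only [Matrix.smul_apply, smul_eq_mul]
    linear_combination (-((N n)⁻¹ * (N n)⁻¹)) * hTr1 n
  have hdetB : B 0 0 * B 1 1 - B 0 1 * B 1 0 = 0 := by
    have h2 := MapClusterPt.continuousAt_comp hgdet.continuousAt hclus
    exact mapClusterPt_eq_of_tendsto h2 htend0
  -- rational matrices
  choose QB hQB using hB
  choose QA hQA using hA
  have hdetQ : QB 0 0 * QB 1 1 - QB 0 1 * QB 1 0 = 0 := by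
    have h : ((QB 0 0 * QB 1 1 - QB 0 1 * QB 1 0 : ℚ) : ℝ) = 0 := by
      push_cast
      rw [← hQB 0 0, ← hQB 1 1, ← hQB 0 1, ← hQB 1 0]
      exact hdetB
    exact_mod_cast h
  obtain ⟨v0, v1, hv, hk0, hk1⟩ := ker2 (QB 0 0) (QB 0 1) (QB 1 0) (QB 1 1) hdetQ
  set r0 : ℚ := v0 * QA 0 0 + v1 * QA 1 0 with hr0
  set r1 : ℚ := v0 * QA 0 1 + v1 * QA 1 1 with hr1
  set D : ℚ := (v0.den : ℚ) * v1.den * r0.den * r1.den with hD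
  set x : Fin 2 → ℤ := ![v0.num * ((v1.den : ℤ) * ((r0.den : ℤ) * (r1.den : ℤ))),
      v1.num * ((v0.den : ℤ) * ((r0.den : ℤ) * (r1.den : ℤ)))] with hxdef
  set y : Fin 2 → ℤ := ![-(r0.num * ((v0.den : ℤ) * ((v1.den : ℤ) * (r1.den : ℤ)))),
      -(r1.num * ((v0.den : ℤ) * ((v1.den : ℤ) * (r0.den : ℤ))))] with hydef
  have hx0q : ((x 0 : ℤ) : ℚ) = D * v0 := by
    simp only [hxdef, Matrix.cons_val_zero]
    push_cast
    rw [qnum v0]; ring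
  have hx1q : ((x 1 : ℤ) : ℚ) = D * v1 := by
    simp only [hxdef, Matrix.cons_val_one, Matrix.head_cons]
    push_cast
    rw [qnum v1]; ring
  have hy0q : ((y 0 : ℤ) : ℚ) = -(D * r0) := by
    simp only [hydef, Matrix.cons_val_zero]
    push_cast
    rw [qnum r0]; ring
  have hy1q : ((y 1 : ℤ) : ℚ) = -(D * r1) := by
    simp only [hydef, Matrix.cons_val_one, Matrix.head_cons]
    push_cast
    rw [qnum r1]; ring
  -- x ≠ 0
  have hdensne : ∀ q : ℚ, ((q.den : ℤ)) ≠ 0 := fun q => Int.natCast_ne_zero.mpr q.den_ne_zero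
  have hxne : ¬(x = 0 ∧ y = 0) := by
    rintro ⟨h1, _⟩
    rcases not_and_or.mp hv with h | h
    · have : x 0 ≠ 0 := by
        simp only [hxdef, Matrix.cons_val_zero]
        exact mul_ne_zero (Rat.num_ne_zero.mpr h)
          (mul_ne_zero (hdensne v1) (mul_ne_zero (hdensne r0) (hdensne r1)))
      exact this (by rw [h1]; rfl)
    · have : x 1 ≠ 0 := by
        simp only [hxdef, Matrix.cons_val_one, Matrix.head_cons]
        exact mul_ne_zero (Rat.num_ne_zero.mpr h)
          (mul_ne_zero (hdensne v0) (mul_ne_zero (hdensne r0) (hdensne r1)))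
      exact this (by rw [h1]; rfl)
  -- the subset property
  have hsub : {n | Tr n = A + N n • B} ⊆ {n : ℕ | (T n)ᵀ.mulVec x + y = 0} := by
    intro n hn
    simp only [Set.mem_setOf_eq] at hn ⊢
    have hm : ∀ i j : Fin 2, ((T n i j : ℤ) : ℝ) = ((QA i j : ℚ) : ℝ) + N n * ((QB i j : ℚ) : ℝ) := by
      intro i j
      have h := congrFun (congrFun hn i) j
      simp only [Matrix.add_apply, Matrix.smul_apply, smul_eq_mul] at h
      rw [hQA, hQB] at h
      simpa [hTrdef, Matrix.map_apply] using h
    have hk0R : ((v0 : ℚ) : ℝ) * ((QB 0 0 : ℚ) : ℝ) + ((v1 : ℚ) : ℝ) * ((QB 1 0 : ℚ) : ℝ) = 0 := by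
      exact_mod_cast congrArg (fun q : ℚ => (q : ℝ)) hk0
    have hk1R : ((v0 : ℚ) : ℝ) * ((QB 0 1 : ℚ) : ℝ) + ((v1 : ℚ) : ℝ) * ((QB 1 1 : ℚ) : ℝ) = 0 := by
      exact_mod_cast congrArg (fun q : ℚ => (q : ℝ)) hk1
    have hr0R : ((r0 : ℚ) : ℝ) = ((v0 : ℚ) : ℝ) * ((QA 0 0 : ℚ) : ℝ) + ((v1 : ℚ) : ℝ) * ((QA 1 0 : ℚ) : ℝ) := by
      exact_mod_cast congrArg (fun q : ℚ => (q : ℝ)) hr0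
    have hr1R : ((r1 : ℚ) : ℝ) = ((v0 : ℚ) : ℝ) * ((QA 0 1 : ℚ) : ℝ) + ((v1 : ℚ) : ℝ) * ((QA 1 1 : ℚ) : ℝ) := by
      exact_mod_cast congrArg (fun q : ℚ => (q : ℝ)) hr1
    have hx0R : ((x 0 : ℤ) : ℝ) = ((D : ℚ) : ℝ) * ((v0 : ℚ) : ℝ) := by exact_mod_cast hx0q
    have hx1R : ((x 1 : ℤ) : ℝ) = ((D : ℚ) : ℝ) * ((v1 : ℚ) : ℝ) := by exact_mod_cast hx1q
    have hy0R : ((y 0 : ℤ) : ℝ) = -(((D : ℚ) : ℝ) * ((r0 : ℚ) : ℝ)) := by exact_mod_cast hy0q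
    have hy1R : ((y 1 : ℤ) : ℝ) = -(((D : ℚ) : ℝ) * ((r1 : ℚ) : ℝ)) := by exact_mod_cast hy1q
    have E0 : T n 0 0 * x 0 + T n 1 0 * x 1 + y 0 = 0 := by
      have hcast : ((T n 0 0 * x 0 + T n 1 0 * x 1 + y 0 : ℤ) : ℝ) = 0 := by
        push_cast
        rw [hx0R, hx1R, hy0R, hm 0 0, hm 1 0]
        linear_combination (((D : ℚ) : ℝ) * N n) * hk0R - ((D : ℚ) : ℝ) * hr0R
      exact_mod_cast hcast
    have E1 : T n 0 1 * x 0 + T n 1 1 * x 1 + y 1 = 0 := by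
      have hcast : ((T n 0 1 * x 0 + T n 1 1 * x 1 + y 1 : ℤ) : ℝ) = 0 := by
        push_cast
        rw [hx0R, hx1R, hy1R, hm 0 1, hm 1 1]
        linear_combination (((D : ℚ) : ℝ) * N n) * hk1R - ((D : ℚ) : ℝ) * hr1R
      exact_mod_cast hcast
    funext i
    fin_cases i
    · simpa [Matrix.mulVec, dotProduct, Fin.sum_univ_two, Matrix.transpose_apply] using
        (by linear_combination E0 : T n 0 0 * x 0 + T n 1 0 * x 1 + y 0 = 0)
    · simpa [Matrix.mulVec, dotProduct, Fin.sum_univ_two, Matrix.transpose_apply] using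
        (by linear_combination E1 : T n 0 1 * x 0 + T n 1 1 * x 1 + y 1 = 0)
  exact (hinf.mono hsub) (hmix x y hxne)

def QAmat (x0 x1 y0 y1 : ℚ) : Matrix (Fin 2) (Fin 2) ℚ :=
  !![-(y0*x0)/(x0^2+x1^2) - (y1*x1)/(y0^2+y1^2), -(y1*x0)/(x0^2+x1^2) + (y0*x1)/(y0^2+y1^2);
     -(y0*x1)/(x0^2+x1^2) + (y1*x0)/(y0^2+y1^2), -(y1*x1)/(x0^2+x1^2) - (y0*x0)/(y0^2+y1^2)]

def QCmat (x0 x1 y0 y1 : ℚ) : Matrix (Fin 2) (Fin 2) ℚ :=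
  !![x1*y0, x1*y1; -(x0*y0), -(x0*y1)]

lemma key_alg (x0 x1 y0 y1 m00 m01 m10 m11 : ℝ)
    (hs : x0^2 + x1^2 ≠ 0) (hσ : y0^2 + y1^2 ≠ 0)
    (e0 : x0*m00 + x1*m10 + y0 = 0) (e1 : x0*m01 + x1*m11 + y1 = 0)
    (ed : m00*m11 - m01*m10 = 1) :
    m00 = (-(y0*x0)/(x0^2+x1^2) - (y1*x1)/(y0^2+y1^2))
        + ((y0*(x1*m00 - x0*m10) + y1*(x1*m01 - x0*m11)) / ((x0^2+x1^2)*(y0^2+y1^2))) * (x1*y0) ∧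
    m01 = (-(y1*x0)/(x0^2+x1^2) + (y0*x1)/(y0^2+y1^2))
        + ((y0*(x1*m00 - x0*m10) + y1*(x1*m01 - x0*m11)) / ((x0^2+x1^2)*(y0^2+y1^2))) * (x1*y1) ∧
    m10 = (-(y0*x1)/(x0^2+x1^2) + (y1*x0)/(y0^2+y1^2))
        + ((y0*(x1*m00 - x0*m10) + y1*(x1*m01 - x0*m11)) / ((x0^2+x1^2)*(y0^2+y1^2))) * (-(x0*y0)) ∧
    m11 = (-(y1*x1)/(x0^2+x1^2) - (y0*x0)/(y0^2+y1^2))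
        + ((y0*(x1*m00 - x0*m10) + y1*(x1*m01 - x0*m11)) / ((x0^2+x1^2)*(y0^2+y1^2))) * (-(x0*y1)) := by
  have hd : y0*(x1*m01 - x0*m11) - y1*(x1*m00 - x0*m10) = x0^2 + x1^2 := by
    linear_combination (x1*m01 - x0*m11)*e0 - (x1*m00 - x0*m10)*e1 + (x0^2+x1^2)*ed
  have I00 : (x0^2+x1^2)*m00 = -(y0*x0) + x1*(x1*m00 - x0*m10) := by linear_combination x0*e0
  have I10 : (x0^2+x1^2)*m10 = -(y0*x1) - x0*(x1*m00 - x0*m10) := by linear_combination x1*e0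
  have I01 : (x0^2+x1^2)*m01 = -(y1*x0) + x1*(x1*m01 - x0*m11) := by linear_combination x0*e1
  have I11 : (x0^2+x1^2)*m11 = -(y1*x1) - x0*(x1*m01 - x0*m11) := by linear_combination x1*e1
  refine ⟨?_, ?_, ?_, ?_⟩ <;> field_simp
  · linear_combination (y0^2+y1^2)*I00 - x1*y1*hd
  · linear_combination (y0^2+y1^2)*I01 + x1*y0*hd
  · linear_combination (y0^2+y1^2)*I10 + x0*y1*hd
  · linear_combination (y0^2+y1^2)*I11 - x0*y0*hd

lemma exists_argmax (M : Matrix (Fin 2) (Fin 2) ℝ) :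
    ∃ p : Fin 2 × Fin 2 × Bool, mnorm M = (cond p.2.2 1 (-1) : ℝ) * M p.1 p.2.1 := by
  have habs : ∀ i j : Fin 2, ∃ b : Bool, |M i j| = (cond b 1 (-1) : ℝ) * M i j := by
    intro i j
    rcases abs_cases (M i j) with ⟨h, _⟩ | ⟨h, _⟩
    · exact ⟨true, by simpa using h⟩
    · exact ⟨false, by simpa using h⟩
  have hmax : ∃ i j : Fin 2, mnorm M = |M i j| := by
    unfold mnorm
    rcases max_choice (max |M 0 0| |M 0 1|) (max |M 1 0| |M 1 1|) with h | h <;> rw [h]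
    · rcases max_choice |M 0 0| |M 0 1| with h' | h' <;> rw [h']
      exacts [⟨0,0,rfl⟩, ⟨0,1,rfl⟩]
    · rcases max_choice |M 1 0| |M 1 1| with h' | h' <;> rw [h']
      exacts [⟨1,0,rfl⟩, ⟨1,1,rfl⟩]
  obtain ⟨i, j, hij⟩ := hmax
  obtain ⟨b, hb⟩ := habs i j
  exact ⟨(i, j, b), by rw [hij, hb]⟩

theorem fwd (T : ℕ → Matrix (Fin 2) (Fin 2) ℤ) (hdet : ∀ n, (T n).det = 1)
    (hnorm : Tendsto (fun n => mnorm ((T n).map (Int.cast : ℤ → ℝ))) atTop atTop)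
    (hnm : ¬ MixingSeq T) :
    ∃ A B : Matrix (Fin 2) (Fin 2) ℝ, RationalEntries A ∧ RationalEntries B ∧
        MapClusterPt B atTop
          (fun n => (mnorm ((T n).map (Int.cast : ℤ → ℝ)))⁻¹ • (T n).map (Int.cast : ℤ → ℝ)) ∧
        {n : ℕ | (T n).map (Int.cast : ℤ → ℝ)
            = A + mnorm ((T n).map (Int.cast : ℤ → ℝ)) • B}.Infinite := by
  classical
  set Tr : ℕ → Matrix (Fin 2) (Fin 2) ℝ := fun n => (T n).map (Int.cast : ℤ → ℝ) with hTrdef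
  unfold MixingSeq at hnm
  push_neg at hnm
  obtain ⟨x, y, hxy, hSfin⟩ := hnm
  set S := {n | (T n)ᵀ.mulVec x + y = 0} with hSdef
  have hS : S.Infinite := hSfin
  obtain ⟨n₀, hn₀⟩ := hS.nonempty
  have hcomp : ∀ n ∈ S, ∀ i : Fin 2, T n 0 i * x 0 + T n 1 i * x 1 + y i = 0 := by
    intro n hn i
    have h := congrFun hn i
    simp only [Matrix.mulVec, dotProduct, Fin.sum_univ_two, Matrix.transpose_apply,
      Pi.add_apply, Pi.zero_apply] at h
    linear_combination h
  have hdet2 : ∀ n, T n 0 0 * T n 1 1 - T n 0 1 * T n 1 0 = 1 := fun n => by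
    have h := hdet n; rwa [Matrix.det_fin_two] at h
  -- x ≠ 0 and y ≠ 0
  have hxne : x ≠ 0 := by
    intro h
    refine hxy h ?_
    funext i
    have h2 := hcomp n₀ hn₀ i
    rw [h] at h2
    simpa using h2
  have hyne : y ≠ 0 := by
    intro h
    have e0 := hcomp n₀ hn₀ 0
    have e1 := hcomp n₀ hn₀ 1
    have ed := hdet2 n₀
    rw [h] at e0 e1
    simp only [Pi.zero_apply, add_zero] at e0 e1
    have hx0 : x = 0 := by
      funext i
      simp only [Pi.zero_apply]
      fin_cases i
      · show x 0 = 0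
        linear_combination (T n₀ 1 1) * e0 - (T n₀ 1 0) * e1 - (x 0) * ed
      · show x 1 = 0
        linear_combination (-(T n₀ 0 1)) * e0 + (T n₀ 0 0) * e1 - (x 1) * ed
    exact hxy hx0 h
  -- nonvanishing sums of squares (rational and real)
  have hcomp2 : ∀ z : Fin 2 → ℤ, z ≠ 0 → z 0 ≠ 0 ∨ z 1 ≠ 0 := by
    intro z hz
    by_contra h
    push_neg at h
    exact hz (by funext i; fin_cases i; exacts [h.1, h.2])
  have hsqR : ∀ z : Fin 2 → ℤ, z ≠ 0 → ((z 0 : ℝ))^2 + ((z 1 : ℝ))^2 ≠ 0 := by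
    intro z hz
    rcases hcomp2 z hz with h | h
    · have h1 : (0:ℝ) < ((z 0 : ℝ))^2 := by positivity
      nlinarith [sq_nonneg ((z 1 : ℝ))]
    · have h1 : (0:ℝ) < ((z 1 : ℝ))^2 := by positivity
      nlinarith [sq_nonneg ((z 0 : ℝ))]
  have hsR := hsqR x hxne
  have hσR := hsqR y hyne
  -- the affine line
  set A0 : Matrix (Fin 2) (Fin 2) ℝ := (QAmat (x 0) (x 1) (y 0) (y 1)).map Rat.cast with hA0def
  set C : Matrix (Fin 2) (Fin 2) ℝ := (QCmat (x 0) (x 1) (y 0) (y 1)).map Rat.cast with hCdef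
  set τ : ℕ → ℝ := fun n => ((y 0 : ℝ)*((x 1 : ℝ)*((T n 0 0 : ℤ) : ℝ) - (x 0 : ℝ)*((T n 1 0 : ℤ) : ℝ))
      + (y 1 : ℝ)*((x 1 : ℝ)*((T n 0 1 : ℤ) : ℝ) - (x 0 : ℝ)*((T n 1 1 : ℤ) : ℝ)))
      / ((((x 0 : ℝ))^2+((x 1 : ℝ))^2)*(((y 0 : ℝ))^2+((y 1 : ℝ))^2)) with hτdef
  have hclaim : ∀ n ∈ S, Tr n = A0 + τ n • C := by
    intro n hn
    have e0R : (x 0 : ℝ)*((T n 0 0 : ℤ) : ℝ) + (x 1 : ℝ)*((T n 1 0 : ℤ) : ℝ) + (y 0 : ℝ) = 0 := by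
      have h2 := congrArg (Int.cast : ℤ → ℝ) (hcomp n hn 0)
      push_cast at h2
      linear_combination h2
    have e1R : (x 0 : ℝ)*((T n 0 1 : ℤ) : ℝ) + (x 1 : ℝ)*((T n 1 1 : ℤ) : ℝ) + (y 1 : ℝ) = 0 := by
      have h2 := congrArg (Int.cast : ℤ → ℝ) (hcomp n hn 1)
      push_cast at h2
      linear_combination h2
    have edR : ((T n 0 0 : ℤ) : ℝ)*((T n 1 1 : ℤ) : ℝ) - ((T n 0 1 : ℤ) : ℝ)*((T n 1 0 : ℤ) : ℝ) = 1 := by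
      have h2 := congrArg (Int.cast : ℤ → ℝ) (hdet2 n)
      push_cast at h2
      linear_combination h2
    have hk := key_alg ((x 0 : ℤ) : ℝ) ((x 1 : ℤ) : ℝ) ((y 0 : ℤ) : ℝ) ((y 1 : ℤ) : ℝ)
      ((T n 0 0 : ℤ) : ℝ) ((T n 0 1 : ℤ) : ℝ) ((T n 1 0 : ℤ) : ℝ) ((T n 1 1 : ℤ) : ℝ)
      hsR hσR e0R e1R edR
    ext i j
    fin_cases i <;> fin_cases j <;>
      simp [hTrdef, hA0def, hCdef, hτdef, QAmat, QCmat, Matrix.map_apply] <;>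
      push_cast
    · linear_combination hk.1
    · linear_combination hk.2.1
    · linear_combination hk.2.2.1
    · linear_combination hk.2.2.2
  -- pigeonhole on the maximal entry
  have hsel : ∀ n, ∃ p : Fin 2 × Fin 2 × Bool,
      mnorm (Tr n) = (cond p.2.2 1 (-1) : ℝ) * Tr n p.1 p.2.1 :=
    fun n => exists_argmax (Tr n)
  choose g hg using hsel
  obtain ⟨⟨i0, j0, b⟩, hS'⟩ : ∃ p, {n | n ∈ S ∧ g n = p}.Infinite := by
    by_contra h
    push_neg at h
    have h : ∀ p, {n | n ∈ S ∧ g n = p}.Finite := h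
    have hsub : S ⊆ ⋃ p : Fin 2 × Fin 2 × Bool, {n | n ∈ S ∧ g n = p} :=
      fun n hn => Set.mem_iUnion.2 ⟨g n, hn, rfl⟩
    exact hS ((Set.finite_iUnion h).subset hsub)
  set qε : ℚ := cond b 1 (-1) with hqε
  set qa : ℚ := qε * QCmat (x 0) (x 1) (y 0) (y 1) i0 j0 with hqa
  set qc : ℚ := qε * QAmat (x 0) (x 1) (y 0) (y 1) i0 j0 with hqc
  have hεR : ((qε : ℚ) : ℝ) = (cond b 1 (-1) : ℝ) := by cases b <;> simp [hqε]
  have hCR : C i0 j0 = ((QCmat (x 0) (x 1) (y 0) (y 1) i0 j0 : ℚ) : ℝ) := by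
    simp [hCdef, Matrix.map_apply]
  have hAR : A0 i0 j0 = ((QAmat (x 0) (x 1) (y 0) (y 1) i0 j0 : ℚ) : ℝ) := by
    simp [hA0def, Matrix.map_apply]
  have hrel : ∀ n ∈ S, g n = (i0, j0, b) → mnorm (Tr n) = (qc : ℝ) + τ n * (qa : ℝ) := by
    intro n hn hgn
    have h1 := hg n
    rw [hgn] at h1
    have h2 : Tr n i0 j0 = A0 i0 j0 + τ n * C i0 j0 := by
      have h3 := congrFun (congrFun (hclaim n hn) i0) j0
      simpa [Matrix.add_apply, Matrix.smul_apply, smul_eq_mul] using h3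
    rw [h1, h2]
    push_cast [hqa, hqc, hεR, hCR, hAR]
    ring
  by_cases hqa0 : qa = 0
  · exfalso
    have hfin : {n | ¬ ((qc : ℝ) < mnorm (Tr n))}.Finite := by
      have hev := hnorm.eventually_gt_atTop ((qc : ℚ) : ℝ)
      rw [← Nat.cofinite_eq_atTop] at hev
      exact eventually_cofinite.mp hev
    apply hS'
    apply hfin.subset
    rintro n ⟨hn, hgn⟩
    have h4 := hrel n hn hgn
    rw [hqa0] at h4
    simp only [Rat.cast_zero, mul_zero, add_zero] at h4
    simp [h4]
  · have hqaR : ((qa : ℚ) : ℝ) ≠ 0 := Rat.cast_ne_zero.mpr hqa0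
    set Af : Matrix (Fin 2) (Fin 2) ℝ :=
      ((QAmat (x 0) (x 1) (y 0) (y 1)) - (qc/qa) • (QCmat (x 0) (x 1) (y 0) (y 1))).map Rat.cast
      with hAfdef
    set Bf : Matrix (Fin 2) (Fin 2) ℝ :=
      ((qa⁻¹) • QCmat (x 0) (x 1) (y 0) (y 1)).map Rat.cast with hBfdef
    have hmain : ∀ n, n ∈ S ∧ g n = (i0, j0, b) → Tr n = Af + mnorm (Tr n) • Bf := by
      rintro n ⟨hn, hgn⟩
      have hτa : τ n * (qa : ℝ) = mnorm (Tr n) - (qc : ℝ) := by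
        rw [hrel n hn hgn]; ring
      set m : ℝ := mnorm (Tr n) with hm
      rw [hclaim n hn]
      ext i j
      simp only [hAfdef, hBfdef, hA0def, hCdef, Matrix.map_apply, Matrix.sub_apply,
        Matrix.smul_apply, Matrix.add_apply, smul_eq_mul, Rat.cast_sub, Rat.cast_mul,
        Rat.cast_div, Rat.cast_inv]
      field_simp
      linear_combination ((QCmat (x 0) (x 1) (y 0) (y 1) i j : ℚ) : ℝ) * hτa
    refine ⟨Af, Bf, ?_, ?_, ?_, ?_⟩
    · intro i j
      exact ⟨((QAmat (x 0) (x 1) (y 0) (y 1)) - (qc/qa) • (QCmat (x 0) (x 1) (y 0) (y 1))) i j,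
        by simp [hAfdef, Matrix.map_apply]⟩
    · intro i j
      exact ⟨((qa⁻¹) • QCmat (x 0) (x 1) (y 0) (y 1)) i j, by simp [hBfdef, Matrix.map_apply]⟩
    · -- cluster point
      have hS'' : (setOf (fun n => n ∈ S ∧ g n = (i0, j0, b))).Infinite := hS'
      set φ : ℕ → ℕ := Nat.nth (fun n => n ∈ S ∧ g n = (i0, j0, b)) with hφdef
      have hmono : StrictMono φ := Nat.nth_strictMono hS''
      have hmem : ∀ k, φ k ∈ S ∧ g (φ k) = (i0, j0, b) :=
        fun k => Nat.nth_mem_of_infinite hS'' k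
      have hφT : Tendsto φ atTop atTop := hmono.tendsto_atTop
      have hNφ : Tendsto (fun k => mnorm (Tr (φ k))) atTop atTop := hnorm.comp hφT
      have hinv : Tendsto (fun k => (mnorm (Tr (φ k)))⁻¹) atTop (𝓝 0) :=
        tendsto_inv_atTop_zero.comp hNφ
      have hlim : Tendsto (fun k => (mnorm (Tr (φ k)))⁻¹ • Af + Bf) atTop (𝓝 Bf) := by
        have h1 := hinv.smul_const Af
        have h2 := h1.add_const Bf
        simpa using h2
      have heq : ∀ᶠ k in atTop,
          (mnorm (Tr (φ k)))⁻¹ • Af + Bf = (mnorm (Tr (φ k)))⁻¹ • Tr (φ k) := by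
        filter_upwards [hNφ.eventually_gt_atTop 0] with k hk
        set m : ℝ := mnorm (Tr (φ k)) with hm
        have h5 := hmain (φ k) (hmem k)
        rw [← hm] at h5
        rw [h5, smul_add, smul_smul, inv_mul_cancel₀ (ne_of_gt hk), one_smul]
      have hconv : Tendsto (fun k => (mnorm (Tr (φ k)))⁻¹ • Tr (φ k)) atTop (𝓝 Bf) :=
        hlim.congr' heq
      exact MapClusterPt.of_comp hφT hconv.mapClusterPt
    · exact hS'.mono (fun n hn => hmain n hn)



theorem stmt2 (T : ℕ → Matrix (Fin 2) (Fin 2) ℤ) (hdet : ∀ n, (T n).det = 1)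
    (hnorm : Tendsto (fun n => mnorm ((T n).map (Int.cast : ℤ → ℝ))) atTop atTop) :
    ¬ MixingSeq T ↔
      ∃ A B : Matrix (Fin 2) (Fin 2) ℝ, RationalEntries A ∧ RationalEntries B ∧
        MapClusterPt B atTop
          (fun n => (mnorm ((T n).map (Int.cast : ℤ → ℝ)))⁻¹ • (T n).map (Int.cast : ℤ → ℝ)) ∧
        {n : ℕ | (T n).map (Int.cast : ℤ → ℝ)
            = A + mnorm ((T n).map (Int.cast : ℤ → ℝ)) • B}.Infinite := by
  constructor
  · exact fwd T hdet hnorm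
  · rintro ⟨A, B, hA, hB, hclus, hinf⟩
    exact stmt2' T hdet hnorm A B hA hB hclus hinf
end
end

section
/- Let U, V ∈ SL(2,ℤ) be unipotent matrices. The sequence T_n = U^{−n} V^n is mixing on 𝕋² if and only if U and V do not commute. -/
open MeasureTheory Matrix Filter Topology

noncomputable section

abbrev SL2 := Matrix.SpecialLinearGroup (Fin 2) ℤ

/-- All eigenvalues of `M` equal `1`. -/
def IsUnipotent (M : Matrix (Fin 2) (Fin 2) ℤ) : Prop :=
  ∀ z : ℂ, (M.map (Int.cast : ℤ → ℂ)).charpoly.IsRoot z → z = 1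

/-- All eigenvalues of `M` have absolute value different from `1`. -/
def IsHyperbolic (M : Matrix (Fin 2) (Fin 2) ℤ) : Prop :=
  ∀ z : ℂ, (M.map (Int.cast : ℤ → ℂ)).charpoly.IsRoot z → ‖z‖ ≠ 1

namespace Stmt3Aux

open Polynomial

abbrev M2 := Matrix (Fin 2) (Fin 2) ℤ

/-- charpoly of a 2×2 complex matrix. -/
lemma charpoly_two (A : Matrix (Fin 2) (Fin 2) ℂ) :
    A.charpoly = (X - C (A 0 0)) * (X - C (A 1 1)) - C (A 0 1) * C (A 1 0) := by
  rw [Matrix.charpoly, Matrix.det_fin_two]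
  rw [charmatrix_apply_eq, charmatrix_apply_eq, charmatrix_apply_ne _ _ _ (by decide),
    charmatrix_apply_ne _ _ _ (by decide)]
  ring

/-- A unipotent element of SL2 has trace 2. -/
lemma trace_eq_two (U : SL2) (hU : IsUnipotent ↑U) :
    (U : M2) 0 0 + (U : M2) 1 1 = 2 := by
  set A : Matrix (Fin 2) (Fin 2) ℂ := ((U : M2)).map (Int.cast : ℤ → ℂ) with hA
  have hdeg : 0 < A.charpoly.degree := by
    rw [Matrix.charpoly_degree_eq_dim]
    simp
  obtain ⟨z, hz⟩ := Complex.exists_root hdeg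
  have h1 : A.charpoly.IsRoot 1 := (hU z hz) ▸ hz
  have h2 : eval 1 A.charpoly = 0 := h1
  rw [charpoly_two] at h2
  simp only [eval_sub, eval_mul, eval_X, eval_C] at h2
  have hdZ : (U : M2) 0 0 * (U : M2) 1 1 - (U : M2) 0 1 * (U : M2) 1 0 = 1 := by
    have := Matrix.SpecialLinearGroup.det_coe U
    rwa [Matrix.det_fin_two] at this
  have hdet : A 0 0 * A 1 1 - A 0 1 * A 1 0 = 1 := by
    simp only [hA, Matrix.map_apply]
    exact_mod_cast hdZ
  have htr : A 0 0 + A 1 1 = 2 := by linear_combination -h2 + hdet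
  have hcast : ((((U : M2) 0 0 + (U : M2) 1 1 : ℤ)) : ℂ) = ((2 : ℤ) : ℂ) := by
    push_cast
    simpa [hA, Matrix.map_apply] using htr
  exact_mod_cast hcast

/-- entry form of a unipotent element of SL2. -/
lemma sl2_entries (U : SL2) (hU : IsUnipotent ↑U) :
    ∃ p q r : ℤ, (U : M2) = 1 + !![p, q; r, -p] ∧ p * p + q * r = 0 := by
  have htr := trace_eq_two U hU
  have hdet : (U : M2) 0 0 * (U : M2) 1 1 - (U : M2) 0 1 * (U : M2) 1 0 = 1 := by
    have := Matrix.SpecialLinearGroup.det_coe U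
    rwa [Matrix.det_fin_two] at this
  refine ⟨(U : M2) 0 0 - 1, (U : M2) 0 1, (U : M2) 1 0, ?_, ?_⟩
  · ext i j
    fin_cases i <;> fin_cases j <;>
      simp [Matrix.add_apply, Matrix.one_apply] <;> linarith
  · linear_combination (U : M2) 0 0 * htr - hdet

lemma pow_coe (U : SL2) (N : M2) (hUeq : (U : M2) = 1 + N) (hN : N * N = 0) (n : ℕ) :
    ((U ^ n : SL2) : M2) = 1 + (n : ℤ) • N := by
  induction n with
  | zero => simp
  | succ n ih =>
    have h : ((U ^ (n + 1) : SL2) : M2) = ((U ^ n : SL2) : M2) * (U : M2) := by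
      rw [pow_succ]; exact Matrix.SpecialLinearGroup.coe_mul _ _
    rw [h, ih, hUeq]
    have hsm : ((n : ℤ) • N) * N = (n : ℤ) • (N * N) := smul_mul_assoc _ _ _
    push_cast
    rw [mul_add, mul_one, add_mul, one_mul, hsm, hN, smul_zero, add_zero, add_smul, one_smul]
    abel

lemma inv_pow_coe (U : SL2) (N : M2) (hUeq : (U : M2) = 1 + N) (hN : N * N = 0) (n : ℕ) :
    (((U ^ n)⁻¹ : SL2) : M2) = 1 - (n : ℤ) • N := by
  have hsm : ((n : ℤ) • N) * ((n : ℤ) • N) = 0 := by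
    rw [smul_mul_assoc, mul_smul_comm, hN, smul_zero, smul_zero]
  have h1 : ((U ^ n : SL2) : M2) * (1 - (n : ℤ) • N) = 1 := by
    rw [pow_coe U N hUeq hN n, mul_sub, mul_one, add_mul, one_mul, hsm]
    abel
  have h2 : (((U ^ n)⁻¹ : SL2) : M2) * ((U ^ n : SL2) : M2) = 1 := by
    rw [← Matrix.SpecialLinearGroup.coe_mul, inv_mul_cancel, Matrix.SpecialLinearGroup.coe_one]
  calc (((U ^ n)⁻¹ : SL2) : M2) = (((U ^ n)⁻¹ : SL2) : M2) * 1 := (mul_one _).symm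
    _ = (((U ^ n)⁻¹ : SL2) : M2) * (((U ^ n : SL2) : M2) * (1 - (n : ℤ) • N)) := by rw [h1]
    _ = ((((U ^ n)⁻¹ : SL2) : M2) * ((U ^ n : SL2) : M2)) * (1 - (n : ℤ) • N) := by
        rw [mul_assoc]
    _ = 1 - (n : ℤ) • N := by rw [h2, one_mul]

lemma Tn_coe (U V : SL2) (N N' : M2) (hUeq : (U : M2) = 1 + N) (hVeq : (V : M2) = 1 + N')
    (hN : N * N = 0) (hN' : N' * N' = 0) (n : ℕ) :
    (((U ^ n)⁻¹ * V ^ n : SL2) : M2)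
      = 1 + (n : ℤ) • (N' - N) - ((n : ℤ) ^ 2) • (N * N') := by
  rw [Matrix.SpecialLinearGroup.coe_mul, inv_pow_coe U N hUeq hN n, pow_coe V N' hVeq hN' n]
  have hsm : ((n : ℤ) • N) * ((n : ℤ) • N') = ((n : ℤ) ^ 2) • (N * N') := by
    rw [smul_mul_assoc, mul_smul_comm, smul_smul]; ring_nf
  rw [sub_mul, one_mul, mul_add, mul_one, hsm, smul_sub]
  abel

lemma comp_eval (W : M2) (x y : Fin 2 → ℤ) (i : Fin 2) :
    (Wᵀ.mulVec x + y) i = W 0 i * x 0 + W 1 i * x 1 + y i := by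
  fin_cases i <;>
    simp [Matrix.mulVec, dotProduct, Fin.sum_univ_two, Matrix.transpose_apply]

lemma quad_fin {a b c : ℤ} (h : {n : ℕ | c + b * (n : ℤ) + a * (n : ℤ) ^ 2 = 0}.Infinite) :
    a = 0 ∧ b = 0 ∧ c = 0 := by
  set p : ℤ[X] := C c + C b * X + C a * X ^ 2 with hp
  have hroots : {x : ℤ | p.IsRoot x}.Infinite := by
    have himg : ((fun n : ℕ => (n : ℤ)) ''
        {n : ℕ | c + b * (n : ℤ) + a * (n : ℤ) ^ 2 = 0}).Infinite :=
      h.image (Set.injOn_of_injective (fun m n hmn => by exact_mod_cast hmn))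
    refine himg.mono ?_
    rintro _ ⟨n, hn, rfl⟩
    simp only [Set.mem_setOf_eq] at hn ⊢
    simp only [IsRoot, hp, eval_add, eval_mul, eval_pow, eval_C, eval_X]
    linear_combination hn
  have hp0 : p = 0 := Polynomial.eq_zero_of_infinite_isRoot p hroots
  have e0 := congrArg (eval 0) hp0
  have e1 := congrArg (eval 1) hp0
  have e2 := congrArg (eval (-1)) hp0
  simp [hp] at e0 e1 e2
  refine ⟨by linarith, by linarith, by linarith⟩

/-- the key 2d cross lemma -/
lemma cross_lemma {v0 v1 u0 u1 a b : ℤ} (hv : ¬(v0 = 0 ∧ v1 = 0)) (hc : u0 * v1 = u1 * v0)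
    (h : a * v0 + b * v1 = 0) : a * u0 + b * u1 = 0 := by
  have h0 : (a * u0 + b * u1) * v0 = 0 := by linear_combination u0 * h - b * hc
  have h1 : (a * u0 + b * u1) * v1 = 0 := by linear_combination a * hc + u1 * h
  by_cases hv0 : v0 = 0
  · have hv1 : v1 ≠ 0 := fun h' => hv ⟨hv0, h'⟩
    exact (mul_eq_zero.mp h1).resolve_right hv1
  · exact (mul_eq_zero.mp h0).resolve_right hv0

end Stmt3Aux

open Stmt3Aux Polynomial

theorem stmt3 (U V : SL2) (hU : IsUnipotent ↑U) (hV : IsUnipotent ↑V) :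
    MixingSeq (fun n => ((U ^ n)⁻¹ * V ^ n : SL2)) ↔ U * V ≠ V * U := by
  obtain ⟨p, q, r, hUeq, hp⟩ := sl2_entries U hU
  obtain ⟨P, Q, R, hVeq, hP⟩ := sl2_entries V hV
  set N : M2 := !![p, q; r, -p] with hNdef
  set N' : M2 := !![P, Q; R, -P] with hN'def
  have hN2 : N * N = 0 := by
    ext i j
    fin_cases i <;> fin_cases j <;>
      simp [hNdef, Matrix.mul_apply, Fin.sum_univ_two] <;>
      (first | ring1 | linear_combination hp | linear_combination -hp)
  have hN'2 : N' * N' = 0 := by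
    ext i j
    fin_cases i <;> fin_cases j <;>
      simp [hN'def, Matrix.mul_apply, Fin.sum_univ_two] <;>
      (first | ring1 | linear_combination hP | linear_combination -hP)
  have hT : ∀ n : ℕ, (((U ^ n)⁻¹ * V ^ n : SL2) : M2)
      = 1 + (n : ℤ) • (N' - N) - ((n : ℤ) ^ 2) • (N * N') :=
    Tn_coe U V N N' hUeq hVeq hN2 hN'2
  have hTe : ∀ n : ℕ, ∀ i j : Fin 2, (((U ^ n)⁻¹ * V ^ n : SL2) : M2) i j
      = (if i = j then 1 else 0) + (n : ℤ) * (N' i j - N i j) - (n : ℤ) ^ 2 * ((N * N') i j) := by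
    intro n i j
    rw [hT n]
    simp only [Matrix.add_apply, Matrix.sub_apply, Matrix.smul_apply, Matrix.one_apply,
      smul_eq_mul]
  constructor
  · -- mixing → not commuting
    intro hmix heq
    have h0 : ((U : M2)) * ((V : M2)) = ((V : M2)) * ((U : M2)) := by
      rw [← Matrix.SpecialLinearGroup.coe_mul, ← Matrix.SpecialLinearGroup.coe_mul, heq]
    rw [hUeq, hVeq] at h0
    have hMeq : N * N' = N' * N := by
      calc N * N' = (1 + N) * (1 + N') - 1 - N - N' := by noncomm_ring
        _ = (1 + N') * (1 + N) - 1 - N - N' := by rw [h0]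
        _ = N' * N := by noncomm_ring
    have hsq : (N * N') * (N * N') = 0 := by
      calc (N * N') * (N * N') = N * ((N' * N) * N') := by noncomm_ring
        _ = N * ((N * N') * N') := by rw [hMeq]
        _ = (N * N) * (N' * N') := by noncomm_ring
        _ = 0 := by rw [hN2, zero_mul]
    have e01 := congrFun (congrFun hMeq 0) 1
    have e10 := congrFun (congrFun hMeq 1) 0
    simp [hNdef, hN'def, Matrix.mul_apply, Fin.sum_univ_two] at e01 e10
    have c2 : p * Q = q * P := by linarith
    have c3 : r * P = p * R := by linarith
    have s00 := congrFun (congrFun hsq 0) 0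
    have s11 := congrFun (congrFun hsq 1) 1
    simp [hNdef, hN'def, Matrix.mul_apply, Fin.sum_univ_two] at s00 s11
    have hA : p * P + q * R = 0 := by
      have h2 : (p * P + q * R) * (p * P + q * R) = 0 := by
        linear_combination s00 - (r * P - p * R) * c2
      exact mul_self_eq_zero.mp h2
    have hD : r * Q + p * P = 0 := by
      have h2 : (r * Q + p * P) * (r * Q + p * P) = 0 := by
        linear_combination s11 - (p * Q - q * P) * c3
      exact mul_self_eq_zero.mp h2
    have hNN' : N * N' = 0 := by
      ext i j
      fin_cases i <;> fin_cases j <;>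
        simp [hNdef, hN'def, Matrix.mul_apply, Fin.sum_univ_two] <;>
        (first | linear_combination hA | linear_combination c2 | linear_combination c3 |
          linear_combination hD)
    have hN'N : N' * N = 0 := by rw [← hMeq]; exact hNN'
    have hM2 : (N' - N) * (N' - N) = 0 := by
      calc (N' - N) * (N' - N) = N' * N' + N * N - N * N' - N' * N := by noncomm_ring
        _ = 0 := by rw [hN2, hN'2, hNN', hN'N]; simp
    have hrel : (P - p) * (P - p) + (Q - q) * (R - r) = 0 := by
      have := congrFun (congrFun hM2 0) 0
      simp [hNdef, hN'def, Matrix.mul_apply, Matrix.sub_apply, Fin.sum_univ_two] at this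
      linear_combination this
    obtain ⟨a, b, hxne, hk0, hk1⟩ : ∃ a b : ℤ, ¬(a = 0 ∧ b = 0) ∧
        (P - p) * a + (R - r) * b = 0 ∧ (Q - q) * a - (P - p) * b = 0 := by
      by_cases h : P - p = 0 ∧ R - r = 0
      · exact ⟨0, 1, by simp, by simp [h.1, h.2], by simp [h.1]⟩
      · refine ⟨R - r, -(P - p), fun hc => h ⟨neg_eq_zero.mp hc.2, hc.1⟩, by ring, ?_⟩
        linear_combination hrel
    set x : Fin 2 → ℤ := ![a, b] with hxdef
    have hall : ∀ n : ℕ, ((((U ^ n)⁻¹ * V ^ n : SL2) : M2))ᵀ.mulVec x + (-x) = 0 := by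
      intro n
      funext i
      rw [show ((0 : Fin 2 → ℤ) i) = 0 from rfl]
      rw [comp_eval, hTe n 0 i, hTe n 1 i]
      fin_cases i <;>
        simp [hxdef, hNN', hNdef, hN'def, Matrix.zero_apply] <;>
        [linear_combination (n : ℤ) * hk0 - (n : ℤ) ^ 2 * a * hA - (n : ℤ) ^ 2 * b * c3;
          linear_combination (n : ℤ) * hk1 - (n : ℤ) ^ 2 * a * c2 - (n : ℤ) ^ 2 * b * hD]
    have hx_ne : ¬(x = 0 ∧ -x = 0) := by
      rintro ⟨hx0, -⟩
      exact hxne ⟨by simpa [hxdef] using congrFun hx0 0, by simpa [hxdef] using congrFun hx0 1⟩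
    have hfin := hmix x (-x) hx_ne
    have huniv : (Set.univ : Set ℕ).Finite := hfin.subset (fun n _ => hall n)
    exact Set.infinite_univ huniv
  · -- not commuting → mixing
    intro hne x y hxy
    by_contra hfin
    have hinf : {n : ℕ | ((((U ^ n)⁻¹ * V ^ n : SL2) : M2))ᵀ.mulVec x + y = 0}.Infinite := hfin
    have key : ∀ i : Fin 2, (x i + y i = 0) ∧
        ((N' 0 i - N 0 i) * x 0 + (N' 1 i - N 1 i) * x 1 = 0) ∧
        ((N * N') 0 i * x 0 + (N * N') 1 i * x 1 = 0) := by
      intro i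
      have hsubset : {n : ℕ | ((((U ^ n)⁻¹ * V ^ n : SL2) : M2))ᵀ.mulVec x + y = 0} ⊆
          {n : ℕ | (x i + y i) + ((N' 0 i - N 0 i) * x 0 + (N' 1 i - N 1 i) * x 1) * (n : ℤ)
            + (-((N * N') 0 i * x 0 + (N * N') 1 i * x 1)) * (n : ℤ) ^ 2 = 0} := by
        intro n hn
        simp only [Set.mem_setOf_eq] at hn ⊢
        have h := congrFun hn i
        rw [show ((0 : Fin 2 → ℤ) i) = 0 from rfl] at h
        rw [comp_eval, hTe n 0 i, hTe n 1 i] at h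
        fin_cases i <;> simp at h ⊢ <;> linear_combination h
      obtain ⟨hA, hB, hC⟩ := quad_fin (hinf.mono hsubset)
      exact ⟨hC, hB, neg_eq_zero.mp hA⟩
    have h1 := (key 0).2.1
    have h2 := (key 1).2.1
    have h3 := (key 0).2.2
    have h4 := (key 1).2.2
    simp [hNdef, hN'def, Matrix.mul_apply, Fin.sum_univ_two] at h1 h2 h3 h4
    by_cases hx : x = 0
    · refine hxy ⟨hx, ?_⟩
      funext i
      have hi := (key i).1
      rw [hx] at hi
      simpa using hi
    · have hx' : ¬(x 0 = 0 ∧ x 1 = 0) := by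
        intro hc
        apply hx
        funext i
        fin_cases i <;> simp [hc.1, hc.2]
      obtain ⟨v0, v1, hv0def, hv1def⟩ :
          ∃ a b : ℤ, a = p * x 0 + r * x 1 ∧ b = q * x 0 - p * x 1 := ⟨_, _, rfl, rfl⟩
      have hN'v0 : P * v0 + R * v1 = 0 := by
        rw [hv0def, hv1def]; linear_combination h3
      have hN'v1 : Q * v0 + (-P) * v1 = 0 := by
        rw [hv0def, hv1def]; linear_combination h4
      have hccc : q * R = Q * r ∧ p * Q = q * P ∧ r * P = p * R := by
        by_cases hv : v0 = 0 ∧ v1 = 0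
        · obtain ⟨hv0', hv1'⟩ := hv
          rw [hv0def] at hv0'
          rw [hv1def] at hv1'
          have hC' : P * x 0 + R * x 1 = 0 := by linear_combination h1 + hv0'
          have hD' : Q * x 0 - P * x 1 = 0 := by linear_combination h2 + hv1'
          have hB2 : q * x 0 + (-p) * x 1 = 0 := by linear_combination hv1'
          have hc1 : P * x 1 = Q * x 0 := by linear_combination -hD'
          have hc2 : R * x 1 = (-P) * x 0 := by linear_combination hC'
          have g1 : p * P + r * Q = 0 := cross_lemma hx' hc1 hv0'
          have g2 : q * P + (-p) * Q = 0 := cross_lemma hx' hc1 hB2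
          have g3 : p * R + r * (-P) = 0 := cross_lemma hx' hc2 hv0'
          have g4 : q * R + (-p) * (-P) = 0 := cross_lemma hx' hc2 hB2
          exact ⟨by linear_combination g4 - g1, by linear_combination -g2,
            by linear_combination -g3⟩
        · have hcu : p * v1 = q * v0 := by
            rw [hv0def, hv1def]; linear_combination (-(x 1)) * hp
          have hcu2 : r * v1 = (-p) * v0 := by
            rw [hv0def, hv1def]; linear_combination (x 0) * hp
          have g1 : P * p + R * q = 0 := cross_lemma hv hcu hN'v0
          have g2 : Q * p + (-P) * q = 0 := cross_lemma hv hcu hN'v1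
          have g3 : P * r + R * (-p) = 0 := cross_lemma hv hcu2 hN'v0
          have g4 : Q * r + (-P) * (-p) = 0 := cross_lemma hv hcu2 hN'v1
          exact ⟨by linear_combination g1 - g4, by linear_combination g2,
            by linear_combination g3⟩
      obtain ⟨c1, c2, c3⟩ := hccc
      apply hne
      have hcm : N * N' = N' * N := by
        ext i j
        fin_cases i <;> fin_cases j <;>
          simp [hNdef, hN'def, Matrix.mul_apply, Fin.sum_univ_two] <;>
          (first | linear_combination c1 | linear_combination 2 * c2 |
            linear_combination 2 * c3 | linear_combination -c1)
      have hcoe : ((U * V : SL2) : M2) = ((V * U : SL2) : M2) := by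
        rw [Matrix.SpecialLinearGroup.coe_mul, Matrix.SpecialLinearGroup.coe_mul, hUeq, hVeq]
        calc (1 + N) * (1 + N') = 1 + N + N' + N * N' := by noncomm_ring
          _ = 1 + N + N' + N' * N := by rw [hcm]
          _ = (1 + N') * (1 + N) := by noncomm_ring
      exact Subtype.coe_injective hcoe
end
end

section
/- Let U, V ∈ SL(2,ℤ) with U unipotent and V hyperbolic. Then the sequence T_n = U^{−n} V^n is mixing on 𝕋². -/
set_option linter.unusedTactic false

open MeasureTheory Matrix Filter Topology

noncomputable section

open Polynomial in
lemma my_charpoly_fin_two {R} [CommRing R] (M : Matrix (Fin 2) (Fin 2) R) :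
    M.charpoly = X ^ 2 - C M.trace * X + C M.det := by
  rw [Matrix.charpoly, Matrix.det_fin_two]
  simp [charmatrix_apply_eq, charmatrix_apply_ne, Matrix.trace_fin_two, Matrix.det_fin_two]
  ring

open Polynomial in
lemma my_root_eq (M : Matrix (Fin 2) (Fin 2) ℤ) (z : ℂ)
    (h : (M.map (Int.cast : ℤ → ℂ)).charpoly.IsRoot z) :
    z ^ 2 - (M.trace : ℂ) * z + (M.det : ℂ) = 0 := by
  have ht : (M.map (Int.cast : ℤ → ℂ)).trace = (M.trace : ℂ) := by
    simp [Matrix.trace, Matrix.map]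
  have hd : (M.map (Int.cast : ℤ → ℂ)).det = (M.det : ℂ) :=
    (RingHom.map_det (Int.castRingHom ℂ) M).symm
  have := h
  rw [Polynomial.IsRoot, my_charpoly_fin_two] at this
  simp only [Polynomial.eval_add, Polynomial.eval_sub, Polynomial.eval_mul, Polynomial.eval_pow,
    Polynomial.eval_C, Polynomial.eval_X, ht, hd] at this
  exact this

open Polynomial in
lemma my_isRoot (M : Matrix (Fin 2) (Fin 2) ℤ) (z : ℂ)
    (h : z ^ 2 - (M.trace : ℂ) * z + (M.det : ℂ) = 0) :
    (M.map (Int.cast : ℤ → ℂ)).charpoly.IsRoot z := by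
  have ht : (M.map (Int.cast : ℤ → ℂ)).trace = (M.trace : ℂ) := by
    simp [Matrix.trace, Matrix.map]
  have hd : (M.map (Int.cast : ℤ → ℂ)).det = (M.det : ℂ) :=
    (RingHom.map_det (Int.castRingHom ℂ) M).symm
  rw [Polynomial.IsRoot, my_charpoly_fin_two]
  simp only [Polynomial.eval_add, Polynomial.eval_sub, Polynomial.eval_mul, Polynomial.eval_pow,
    Polynomial.eval_C, Polynomial.eval_X, ht, hd]
  exact h

open Polynomial in
lemma my_exists_root (M : Matrix (Fin 2) (Fin 2) ℂ) : ∃ z, M.charpoly.IsRoot z := by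
  have hdeg : M.charpoly.natDegree = 2 := by simp [M.charpoly_natDegree_eq_dim]
  have : 0 < M.charpoly.degree := by
    rw [Polynomial.degree_eq_natDegree (fun h => by simp [h] at hdeg), hdeg]
    norm_num
  exact Complex.exists_root this

lemma my_trace_unip (U : SL2) (hU : IsUnipotent ↑U) :
    Matrix.trace (U : Matrix (Fin 2) (Fin 2) ℤ) = 2 := by
  obtain ⟨z, hz⟩ := my_exists_root (((U : Matrix (Fin 2) (Fin 2) ℤ)).map (Int.cast : ℤ → ℂ))
  have h1 : z = 1 := hU z hz
  have h2 := my_root_eq _ z hz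
  rw [h1] at h2
  have hdet : Matrix.det (U : Matrix (Fin 2) (Fin 2) ℤ) = 1 := U.2
  rw [hdet] at h2
  have : ((Matrix.trace (U : Matrix (Fin 2) (Fin 2) ℤ) : ℤ) : ℂ) = 2 := by
    push_cast at h2 ⊢; linear_combination -h2
  exact_mod_cast this

lemma my_trace_hyp (V : SL2) (hV : IsHyperbolic ↑V) :
    3 ≤ |Matrix.trace (V : Matrix (Fin 2) (Fin 2) ℤ)| := by
  by_contra h
  push_neg at h
  set t := Matrix.trace (V : Matrix (Fin 2) (Fin 2) ℤ) with htdef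
  have hdet : Matrix.det (V : Matrix (Fin 2) (Fin 2) ℤ) = 1 := V.2
  rw [abs_lt] at h
  have hcases : t = -2 ∨ t = -1 ∨ t = 0 ∨ t = 1 ∨ t = 2 := by omega
  have hs3 : ((Real.sqrt 3 : ℝ) : ℂ) ^ 2 = 3 := by
    rw [← Complex.ofReal_pow, Real.sq_sqrt (by norm_num : (3:ℝ) ≥ 0)]
    norm_num
  have hI := Complex.I_sq
  have habs : ∀ u : ℝ, u ^ 2 + 3 = 4 →
      ‖((u + Real.sqrt 3 * Complex.I) / 2 : ℂ)‖ = 1 := by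
    intro u hu
    have h1 : ‖(((u : ℝ) : ℂ) + (Real.sqrt 3 : ℝ) * Complex.I)‖ = 2 := by
      rw [Complex.norm_add_mul_I]
      have h4 : u ^ 2 + Real.sqrt 3 ^ 2 = 4 := by
        rw [Real.sq_sqrt (by norm_num : (0:ℝ) ≤ 3)]; linarith
      rw [h4, show (4:ℝ) = 2 ^ 2 by norm_num, Real.sqrt_sq (by norm_num : (0:ℝ) ≤ 2)]
    rw [norm_div, h1]
    simp
  rcases hcases with h' | h' | h' | h' | h'
  · exact hV (-1) (my_isRoot _ _ (by rw [← htdef, h', hdet]; push_cast; ring)) (by simp)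
  · refine hV ((-1 + Real.sqrt 3 * Complex.I) / 2)
      (my_isRoot _ _ ?_) ?_
    · rw [← htdef, h', hdet]
      push_cast
      linear_combination (Complex.I ^ 2 / 4) * hs3 + (3 / 4 : ℂ) * hI
    · have := habs (-1) (by norm_num)
      push_cast at this ⊢
      convert this using 2
  · exact hV Complex.I
      (my_isRoot _ _ (by rw [← htdef, h', hdet]; push_cast; linear_combination hI)) (by simp)
  · refine hV ((1 + Real.sqrt 3 * Complex.I) / 2)
      (my_isRoot _ _ ?_) ?_
    · rw [← htdef, h', hdet]
      push_cast
      linear_combination (Complex.I ^ 2 / 4) * hs3 + (3 / 4 : ℂ) * hI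
    · have := habs 1 (by norm_num)
      push_cast at this ⊢
      convert this using 2
  · exact hV 1 (my_isRoot _ _ (by rw [← htdef, h', hdet]; push_cast; ring)) (by simp)

/-- Cayley–Hamilton for 2×2 integer matrices. -/
lemma my_ch2 (M : Matrix (Fin 2) (Fin 2) ℤ) :
    M * M = M.trace • M - M.det • (1 : Matrix (Fin 2) (Fin 2) ℤ) := by
  ext i j
  rw [Matrix.mul_apply]
  simp only [Matrix.sub_apply, Matrix.smul_apply, smul_eq_mul, Matrix.one_apply,
    Fin.sum_univ_two, Matrix.trace_fin_two, Matrix.det_fin_two]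
  fin_cases i <;> fin_cases j <;> norm_num <;> ring

lemma my_exp_dom (A B : ℕ) : ∃ m : ℕ, ∀ n ≥ m, A + B * n < 2 ^ n := by
  set C := A + B + 1 with hC
  refine ⟨2 * C + 2, fun n hn => ?_⟩
  have hn1 : 1 ≤ n := by omega
  have h1 : A + B * n < C * n := by nlinarith
  have hCpow : C < 2 ^ C := Nat.lt_two_pow_self (n := C)
  set j := n - C with hj
  have hjn : n = C + j := by omega
  have hj2 : 2 ≤ j := by omega
  have hCj : C ≤ j := by omega
  have h2 : n ≤ 2 ^ j := by
    have hj1 : j ≤ 2 ^ (j - 1) := by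
      have := Nat.lt_two_pow_self (n := j - 1)
      omega
    have : 2 * j ≤ 2 ^ j := by
      calc 2 * j ≤ 2 * 2 ^ (j - 1) := by omega
        _ = 2 ^ j := by rw [← pow_succ']; congr 1; omega
    omega
  calc A + B * n < C * n := h1
    _ < 2 ^ C * n := by
        exact mul_lt_mul_of_pos_right hCpow (by omega : 0 < n)
    _ ≤ 2 ^ C * 2 ^ j := Nat.mul_le_mul_left _ h2
    _ = 2 ^ n := by rw [← pow_add, hjn]

theorem stmt4 (U V : SL2) (hU : IsUnipotent ↑U) (hV : IsHyperbolic ↑V) :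
    MixingSeq (fun n => ((U ^ n)⁻¹ * V ^ n : SL2)) := by
  intro x y hxy
  set A : Matrix (Fin 2) (Fin 2) ℤ := (U : Matrix (Fin 2) (Fin 2) ℤ) with hA
  set B : Matrix (Fin 2) (Fin 2) ℤ := (V : Matrix (Fin 2) (Fin 2) ℤ) with hB
  set N : Matrix (Fin 2) (Fin 2) ℤ := A - 1 with hNdef
  have htrA : A.trace = 2 := my_trace_unip U hU
  have hdetA : A.det = 1 := U.2
  have hdetB : B.det = 1 := V.2
  set t : ℤ := B.trace with htdef
  have htV : 3 ≤ |t| := my_trace_hyp V hV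
  -- N is square-zero
  have hN2 : N * N = 0 := by
    have ha : A 0 0 + A 1 1 = 2 := by
      rw [← Matrix.trace_fin_two]; exact htrA
    have hd : A 0 0 * A 1 1 - A 0 1 * A 1 0 = 1 := by
      rw [← Matrix.det_fin_two]; exact hdetA
    ext i j
    fin_cases i <;> fin_cases j <;>
      simp [hNdef, Matrix.mul_apply, Fin.sum_univ_two, Matrix.sub_apply, Matrix.one_apply] <;>
      first
      | linear_combination A 0 0 * ha - hd
      | linear_combination A 0 1 * ha
      | linear_combination A 1 0 * ha
      | linear_combination A 1 1 * ha - hd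
  have hAN : A = 1 + N := by rw [hNdef]; abel
  have hA1N : A * (1 - N) = 1 := by
    rw [hAN, show (1 + N) * (1 - N) = 1 + N - N - N * N by noncomm_ring, hN2]
    abel
  have hinv : ((U⁻¹ : SL2) : Matrix (Fin 2) (Fin 2) ℤ) = 1 - N := by
    have h1 : ((U⁻¹ : SL2) : Matrix (Fin 2) (Fin 2) ℤ) * A = 1 := by
      rw [hA, ← Matrix.SpecialLinearGroup.coe_mul, inv_mul_cancel]; rfl
    calc ((U⁻¹ : SL2) : Matrix (Fin 2) (Fin 2) ℤ)
        = ((U⁻¹ : SL2) : Matrix (Fin 2) (Fin 2) ℤ) * (A * (1 - N)) := by rw [hA1N, mul_one]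
      _ = (((U⁻¹ : SL2) : Matrix (Fin 2) (Fin 2) ℤ) * A) * (1 - N) := by rw [mul_assoc]
      _ = 1 - N := by rw [h1, one_mul]
  have hpowN : ∀ n : ℕ, (1 - N) ^ n = 1 - (n : ℤ) • N := by
    intro n
    induction n with
    | zero => simp
    | succ n ih =>
      have key : N * (1 - N) = N := by rw [mul_sub, mul_one, hN2, sub_zero]
      rw [pow_succ, ih, sub_mul, one_mul, smul_mul_assoc, key]
      push_cast
      rw [add_smul, one_smul]
      abel
  -- the matrix M = (V⁻¹)ᵀ
  set M : Matrix (Fin 2) (Fin 2) ℤ := ((V⁻¹ : SL2) : Matrix (Fin 2) (Fin 2) ℤ)ᵀ with hM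
  have hMBt : M * Bᵀ = 1 := by
    rw [hM, ← Matrix.transpose_mul, hB, ← Matrix.SpecialLinearGroup.coe_mul,
      mul_inv_cancel]
    simp
  have hBtM : Bᵀ * M = 1 := by
    rw [hM, ← Matrix.transpose_mul, hB, ← Matrix.SpecialLinearGroup.coe_mul,
      inv_mul_cancel]
    simp
  have htrM : M.trace = t := by
    rw [hM, Matrix.trace_transpose, Matrix.SpecialLinearGroup.coe_inv,
      Matrix.adjugate_fin_two, htdef]
    simp [Matrix.trace_fin_two]
    ring
  have hdetM : M.det = 1 := by
    rw [hM, Matrix.det_transpose]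
    exact (V⁻¹ : SL2).2
  have hM2 : M * M = t • M - 1 := by
    have := my_ch2 M
    rw [htrM, hdetM] at this
    simpa using this
  have hMn_Bn : ∀ n : ℕ, M ^ n * (Bᵀ) ^ n = 1 := by
    intro n
    have hc : Commute M Bᵀ := by
      unfold Commute SemiconjBy
      rw [hMBt, hBtM]
    rw [← hc.mul_pow, hMBt, one_pow]
  have hBn_Mn : ∀ n : ℕ, (Bᵀ) ^ n * M ^ n = 1 := by
    intro n
    have hc : Commute Bᵀ M := by
      unfold Commute SemiconjBy
      rw [hMBt, hBtM]
    rw [← hc.mul_pow, hBtM, one_pow]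
  set z : ℕ → Fin 2 → ℤ := fun n => (M ^ n).mulVec y with hz
  set a : Fin 2 → ℤ := Nᵀ.mulVec x with ha
  -- solutions satisfy z n = n • a - x
  have hsol : ∀ n : ℕ, ((((U ^ n)⁻¹ * V ^ n : SL2) : Matrix (Fin 2) (Fin 2) ℤ))ᵀ.mulVec x + y = 0
      → z n = (n : ℤ) • a - x := by
    intro n hn
    have hcoe : (((U ^ n)⁻¹ * V ^ n : SL2) : Matrix (Fin 2) (Fin 2) ℤ)
        = (1 - (n : ℤ) • N) * B ^ n := by
      rw [← hpowN n, ← hinv, ← inv_pow]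
      push_cast
      rfl
    rw [hcoe, Matrix.transpose_mul, Matrix.transpose_pow, ← Matrix.mulVec_mulVec] at hn
    have hvec : (1 - (n : ℤ) • N)ᵀ.mulVec x = x - (n : ℤ) • a := by
      rw [Matrix.transpose_sub, Matrix.transpose_one, Matrix.transpose_smul,
        Matrix.sub_mulVec, Matrix.one_mulVec, Matrix.smul_mulVec, ha]
    rw [hvec] at hn
    have hn' : ((Bᵀ) ^ n).mulVec (x - (n : ℤ) • a) = -y := by
      rw [eq_neg_iff_add_eq_zero]; exact hn
    have := congrArg (fun v => (M ^ n).mulVec v) hn'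
    simp only [Matrix.mulVec_mulVec, hMn_Bn n, Matrix.one_mulVec, Matrix.mulVec_neg] at this
    have h2 := congrArg Neg.neg this
    rw [neg_neg, neg_sub] at h2
    exact h2.symm
  by_cases hy : y = 0
  · -- trivial direction: at most one solution
    have hx : x ≠ 0 := fun hx => hxy ⟨hx, hy⟩
    have hzn : ∀ n, z n = 0 := fun n => by simp [hz, hy]
    by_cases ha0 : a = 0
    · apply Set.Finite.subset Set.finite_empty
      intro n hn
      exfalso
      have h1 := hsol n hn
      rw [hzn n, ha0, smul_zero, zero_sub] at h1
      exact hx (by rw [← neg_neg x, ← h1, neg_zero])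
    · obtain ⟨i, hi⟩ : ∃ i, a i ≠ 0 := by
        by_contra h0
        push_neg at h0
        exact ha0 (funext h0)
      have hss : {n : ℕ |
          ((((fun n => ((U ^ n)⁻¹ * V ^ n : SL2)) n : SL2) : Matrix (Fin 2) (Fin 2) ℤ))ᵀ.mulVec x
            + y = 0}.Subsingleton := by
        intro p hp q hq
        have h1 := hsol p hp
        have h2 := hsol q hq
        rw [hzn p] at h1
        rw [hzn q] at h2
        have h3 : (p : ℤ) • a = (q : ℤ) • a := by
          have := h1.symm.trans h2
          have h4 : (p : ℤ) • a - x + x = (q : ℤ) • a - x + x := by rw [this]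
          simpa [sub_add_cancel] using h4
        have h5 := congrFun h3 i
        simp only [Pi.smul_apply, smul_eq_mul] at h5
        have h6 : (p : ℤ) = (q : ℤ) := mul_right_cancel₀ hi h5
        exact_mod_cast h6
      exact hss.finite
  · -- main case: y ≠ 0
    set b : ℕ → ℤ := fun n => |z n 0| + |z n 1| with hb
    have hrec : ∀ n, z (n + 2) = t • z (n + 1) - z n := by
      intro n
      show M ^ (n + 2) *ᵥ y = t • (M ^ (n + 1) *ᵥ y) - M ^ n *ᵥ y
      have hp2 : M ^ (n + 2) = (M * M) * M ^ n := by
        rw [show n + 2 = 2 + n by omega, pow_add, pow_two]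
      have hp1 : M ^ (n + 1) = M * M ^ n := by
        rw [show n + 1 = 1 + n by omega, pow_add, pow_one]
      rw [hp2, hp1, hM2, ← Matrix.mulVec_mulVec, ← Matrix.mulVec_mulVec,
        Matrix.sub_mulVec, Matrix.smul_mulVec, Matrix.one_mulVec]
    have hbpos : ∀ n, 1 ≤ b n := by
      intro n
      have hzne : z n ≠ 0 := by
        intro h0
        apply hy
        have : (Bᵀ ^ n * M ^ n) *ᵥ y = y := by rw [hBn_Mn n, Matrix.one_mulVec]
        rw [← Matrix.mulVec_mulVec] at this
        rw [show M ^ n *ᵥ y = z n from rfl, h0, Matrix.mulVec_zero] at this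
        exact this.symm
      obtain ⟨i, hi⟩ := Function.ne_iff.mp hzne
      have h0 := abs_nonneg (z n 0)
      have h1 := abs_nonneg (z n 1)
      have hip : 1 ≤ |z n i| := abs_pos.mpr hi
      show 1 ≤ |z n 0| + |z n 1|
      have hi2 : i = 0 ∨ i = 1 := by fin_cases i <;> simp
      rcases hi2 with h | h <;> rw [h] at hip <;> linarith
    have hbrec : ∀ n, 3 * b (n + 1) - b n ≤ b (n + 2) := by
      intro n
      have h := hrec n
      have h0 := congrFun h 0
      have h1 := congrFun h 1
      simp only [Pi.sub_apply, Pi.smul_apply, smul_eq_mul] at h0 h1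
      have k0 : |t| * |z (n + 1) 0| - |z n 0| ≤ |z (n + 2) 0| := by
        rw [h0]
        calc |t| * |z (n + 1) 0| - |z n 0| = |t * z (n + 1) 0| - |z n 0| := by rw [abs_mul]
          _ ≤ |t * z (n + 1) 0 - z n 0| := abs_sub_abs_le_abs_sub _ _
      have k1 : |t| * |z (n + 1) 1| - |z n 1| ≤ |z (n + 2) 1| := by
        rw [h1]
        calc |t| * |z (n + 1) 1| - |z n 1| = |t * z (n + 1) 1| - |z n 1| := by rw [abs_mul]
          _ ≤ |t * z (n + 1) 1 - z n 1| := abs_sub_abs_le_abs_sub _ _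
      have m0 : 3 * |z (n + 1) 0| ≤ |t| * |z (n + 1) 0| :=
        mul_le_mul_of_nonneg_right htV (abs_nonneg _)
      have m1 : 3 * |z (n + 1) 1| ≤ |t| * |z (n + 1) 1| :=
        mul_le_mul_of_nonneg_right htV (abs_nonneg _)
      show 3 * (|z (n + 1) 0| + |z (n + 1) 1|) - (|z n 0| + |z n 1|)
          ≤ |z (n + 2) 0| + |z (n + 2) 1|
      linarith
    have hex : ∃ n0, b n0 ≤ b (n0 + 1) := by
      by_contra hcon
      push_neg at hcon
      have hdec : ∀ n : ℕ, b n ≤ b 0 - n := by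
        intro n
        induction n with
        | zero => simp
        | succ n ih =>
          have := hcon n
          push_cast
          push_cast at ih
          linarith
      have h1 := hbpos ((b 0).toNat)
      have h2 := hdec ((b 0).toNat)
      have h3 := hbpos 0
      rw [Int.toNat_of_nonneg (by linarith)] at h2
      linarith
    obtain ⟨n0, hn0⟩ := hex
    have hgrow : ∀ k : ℕ, b (n0 + k) ≤ b (n0 + k + 1) ∧ 2 ^ k ≤ b (n0 + k + 1) := by
      intro k
      induction k with
      | zero => exact ⟨hn0, by simpa using hbpos (n0 + 1)⟩
      | succ k ih =>
        obtain ⟨ih1, ih2⟩ := ih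
        have h3 := hbrec (n0 + k)
        have hp := hbpos (n0 + k + 1)
        constructor
        · show b (n0 + k + 1) ≤ b (n0 + k + 1 + 1)
          linarith
        · show (2 : ℤ) ^ (k + 1) ≤ b (n0 + k + 1 + 1)
          rw [pow_succ]
          linarith
    rw [← Set.not_infinite]
    intro hinf
    set c : ℤ := |x 0| + |x 1| with hc
    set d : ℤ := |a 0| + |a 1| with hd
    have hc0 : 0 ≤ c := by positivity
    have hd0 : 0 ≤ d := by positivity
    obtain ⟨m, hm⟩ := my_exp_dom (c.toNat + d.toNat * (n0 + 1)) d.toNat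
    obtain ⟨n, hnS, hngt⟩ := hinf.exists_gt (n0 + 1 + m)
    set k0 : ℕ := n - (n0 + 1) with hk0
    have hkm : m ≤ k0 := by omega
    have hnk : n0 + k0 + 1 = n := by omega
    have hlow : (2 : ℤ) ^ k0 ≤ b n := by
      have := (hgrow k0).2
      rwa [hnk] at this
    have hub : b n ≤ c + d * n := by
      have hsn := hsol n hnS
      have e0 := congrFun hsn 0
      have e1 := congrFun hsn 1
      simp only [Pi.sub_apply, Pi.smul_apply, smul_eq_mul] at e0 e1
      have f0 : |z n 0| ≤ (n : ℤ) * |a 0| + |x 0| := by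
        rw [e0]
        calc |(n : ℤ) * a 0 - x 0| ≤ |(n : ℤ) * a 0| + |x 0| := by
              rw [sub_eq_add_neg]
              exact (abs_add_le _ _).trans (by rw [abs_neg])
          _ = (n : ℤ) * |a 0| + |x 0| := by
              rw [abs_mul, abs_of_nonneg (by positivity : (0:ℤ) ≤ (n : ℤ))]
      have f1 : |z n 1| ≤ (n : ℤ) * |a 1| + |x 1| := by
        rw [e1]
        calc |(n : ℤ) * a 1 - x 1| ≤ |(n : ℤ) * a 1| + |x 1| := by
              rw [sub_eq_add_neg]
              exact (abs_add_le _ _).trans (by rw [abs_neg])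
          _ = (n : ℤ) * |a 1| + |x 1| := by
              rw [abs_mul, abs_of_nonneg (by positivity : (0:ℤ) ≤ (n : ℤ))]
      show |z n 0| + |z n 1| ≤ c + d * n
      rw [hc, hd]
      nlinarith [f0, f1]
    have hnat := hm k0 hkm
    have hcast : (c + d * (n0 + 1 : ℕ) + d * k0 : ℤ) < 2 ^ k0 := by
      have h2 : ((c.toNat + d.toNat * (n0 + 1) + d.toNat * k0 : ℕ) : ℤ) < ((2 ^ k0 : ℕ) : ℤ) := by
        exact_mod_cast hnat
      push_cast at h2
      rw [Int.toNat_of_nonneg hc0, Int.toNat_of_nonneg hd0] at h2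
      push_cast
      linarith
    have hfin : c + d * n < 2 ^ k0 := by
      have : (n : ℤ) = ((n0 + 1 : ℕ) : ℤ) + (k0 : ℤ) := by
        push_cast
        omega
      rw [this, mul_add]
      push_cast at hcast ⊢
      linarith
    linarith
end
end

section
/- If T₁, T₂, T₃ ∈ SL(2,ℤ) are hyperbolic matrices having the same eigenvalue λ > 1, then there exists (x₁,x₂,x₃) ∈ (ℤ²)³ − {(0,0,0)} such that (T₁ⁿ)ᵀ x₁ + (T₂ⁿ)ᵀ x₂ + (T₃ⁿ)ᵀ x₃ = 0 for every n ≥ 1. In particular, the sequences T₁ⁿ, T₂ⁿ, T₃ⁿ are not jointly mixing on 𝕋². -/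
open MeasureTheory Matrix Filter Topology

noncomputable section

open Polynomial

lemma charpoly_fin_two' {R : Type*} [CommRing R] (N : Matrix (Fin 2) (Fin 2) R) :
    N.charpoly = X ^ 2 - C N.trace * X + C N.det := by
  rw [Matrix.charpoly, Matrix.det_fin_two, Matrix.charmatrix_apply_eq,
    Matrix.charmatrix_apply_eq, Matrix.charmatrix_apply_ne _ _ _ (by decide),
    Matrix.charmatrix_apply_ne _ _ _ (by decide), Matrix.trace_fin_two, Matrix.det_fin_two]
  simp only [C_add, C_sub, C_mul]; ring

lemma sq_eq_trace_smul_sub {R : Type*} [CommRing R] (N : Matrix (Fin 2) (Fin 2) R) :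
    N ^ 2 = N.trace • N - N.det • (1 : Matrix (Fin 2) (Fin 2) R) := by
  have h := Matrix.aeval_self_charpoly N
  rw [charpoly_fin_two'] at h
  simp only [map_add, map_sub, _root_.map_mul, map_pow, aeval_X, aeval_C,
    Algebra.algebraMap_eq_smul_one, smul_mul_assoc, one_mul] at h
  rw [sub_add_eq_add_sub, sub_eq_zero] at h
  rw [eq_sub_iff_add_eq, h]

lemma root_gives {M : Matrix (Fin 2) (Fin 2) ℤ} (hd : M.det = 1) {lam : ℝ}
    (h : ((M.map (Int.cast : ℤ → ℝ)).charpoly).IsRoot lam) :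
    lam ^ 2 - (M.trace : ℝ) * lam + 1 = 0 := by
  have ht : (M.map (Int.cast : ℤ → ℝ)).trace = (M.trace : ℝ) := by
    simp [Matrix.trace, Matrix.diag]
  have hdet : (M.map (Int.cast : ℤ → ℝ)).det = 1 := by
    have := RingHom.map_det (Int.castRingHom ℝ) M
    simp only [RingHom.mapMatrix_apply] at this
    rw [show (Int.cast : ℤ → ℝ) = ⇑(Int.castRingHom ℝ) from rfl, ← this, hd]
    simp
  rw [Polynomial.IsRoot, charpoly_fin_two', ht, hdet] at h
  simpa using h

lemma exists_ker (A B : Matrix (Fin 2) (Fin 2) ℤ) :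
    ∃ p q : Fin 2 → ℤ, ¬(p = 0 ∧ q = 0) ∧ A.mulVec p + B.mulVec q = 0 := by
  have hdet : (Matrix.fromBlocks A B 0 0).det = 0 := by
    rw [Matrix.det_fromBlocks_zero₂₁]
    simp
  obtain ⟨v, hv0, hv⟩ := Matrix.exists_mulVec_eq_zero_iff.mpr hdet
  refine ⟨v ∘ Sum.inl, v ∘ Sum.inr, ?_, ?_⟩
  · rintro ⟨h1, h2⟩
    apply hv0
    funext i
    cases i with
    | inl i => exact congrFun h1 i
    | inr i => exact congrFun h2 i
  · have : v = Sum.elim (v ∘ Sum.inl) (v ∘ Sum.inr) := by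
      funext i; cases i <;> rfl
    rw [this, Matrix.fromBlocks_mulVec] at hv
    have := congrFun hv
    funext i
    have h := this (Sum.inl i)
    fin_cases i <;> simp at h ⊢ <;> linarith

lemma step_lemma {M : Matrix (Fin 2) (Fin 2) ℤ} {t : ℤ} (h2 : M ^ 2 = t • M - 1)
    (x : Fin 2 → ℤ) (m : ℕ) :
    (M ^ (m + 2))ᵀ.mulVec x = t • ((M ^ (m + 1))ᵀ.mulVec x) - (M ^ m)ᵀ.mulVec x := by
  have hp : M ^ (m + 2) = t • M ^ (m + 1) - M ^ m := by
    rw [pow_add, h2, mul_sub, mul_smul_comm, mul_one, ← pow_succ]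
  rw [hp, Matrix.transpose_sub, Matrix.transpose_smul, Matrix.sub_mulVec,
    Matrix.smul_mulVec]


/-- Sequences of integer matrices are jointly mixing on 𝕋²
(Fourier-analytic characterization). -/
def JointlyMixingSeq {k : ℕ} (S : Fin k → ℕ → Matrix (Fin 2) (Fin 2) ℤ) : Prop :=
  ∀ (x : Fin k → Fin 2 → ℤ) (y : Fin 2 → ℤ), ¬(x = 0 ∧ y = 0) →
    {n : ℕ | (∑ i, (S i n)ᵀ.mulVec (x i)) + y = 0}.Finite

theorem stmt6 (T₁ T₂ T₃ : SL2) (hh : _root_.IsHyperbolic (↑T₁ : Matrix (Fin 2) (Fin 2) ℤ) ∧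
      _root_.IsHyperbolic ↑T₂ ∧ _root_.IsHyperbolic ↑T₃)
    (lam : ℝ) (hlam : 1 < lam)
    (hroot : ∀ i ∈ [T₁, T₂, T₃],
      (((i : Matrix (Fin 2) (Fin 2) ℤ)).map (Int.cast : ℤ → ℝ)).charpoly.IsRoot lam) :
    (∃ x₁ x₂ x₃ : Fin 2 → ℤ, ¬(x₁ = 0 ∧ x₂ = 0 ∧ x₃ = 0) ∧
      ∀ n : ℕ, 1 ≤ n →
        ((T₁ ^ n : SL2) : Matrix (Fin 2) (Fin 2) ℤ)ᵀ.mulVec x₁ +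
        ((T₂ ^ n : SL2) : Matrix (Fin 2) (Fin 2) ℤ)ᵀ.mulVec x₂ +
        ((T₃ ^ n : SL2) : Matrix (Fin 2) (Fin 2) ℤ)ᵀ.mulVec x₃ = 0) ∧
    ¬ JointlyMixingSeq
        (fun i n => ((![T₁, T₂, T₃] i ^ n : SL2) : Matrix (Fin 2) (Fin 2) ℤ)) := by
  set M₁ : Matrix (Fin 2) (Fin 2) ℤ := ↑T₁ with hM₁
  set M₂ : Matrix (Fin 2) (Fin 2) ℤ := ↑T₂ with hM₂
  set M₃ : Matrix (Fin 2) (Fin 2) ℤ := ↑T₃ with hM₃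
  have hlam0 : lam ≠ 0 := by positivity
  have e₁ := root_gives T₁.2 (hroot T₁ (by simp))
  have e₂ := root_gives T₂.2 (hroot T₂ (by simp))
  have e₃ := root_gives T₃.2 (hroot T₃ (by simp))
  set t : ℤ := M₁.trace with ht
  have htr2 : M₂.trace = t := by
    have : (M₂.trace : ℝ) * lam = (t : ℝ) * lam := by linarith
    exact_mod_cast mul_right_cancel₀ hlam0 this
  have htr3 : M₃.trace = t := by
    have : (M₃.trace : ℝ) * lam = (t : ℝ) * lam := by linarith
    exact_mod_cast mul_right_cancel₀ hlam0 this
  have hsq : ∀ (T : SL2), (↑T : Matrix (Fin 2) (Fin 2) ℤ).trace = t →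
      (↑T : Matrix (Fin 2) (Fin 2) ℤ) ^ 2 = t • (↑T : Matrix (Fin 2) (Fin 2) ℤ) - 1 := by
    intro T hT
    have := sq_eq_trace_smul_sub (↑T : Matrix (Fin 2) (Fin 2) ℤ)
    rwa [hT, T.2, one_smul] at this
  have hsq1 : M₁ ^ 2 = t • M₁ - 1 := hsq T₁ rfl
  have hsq2 : M₂ ^ 2 = t • M₂ - 1 := hsq T₂ htr2
  have hsq3 : M₃ ^ 2 = t • M₃ - 1 := hsq T₃ htr3
  obtain ⟨p, q, hpq, hAB⟩ := exists_ker (M₁ - M₃)ᵀ (M₂ - M₃)ᵀ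
  set x₃ : Fin 2 → ℤ := -(p + q) with hx₃
  have key : ∀ n : ℕ, (M₁ ^ n)ᵀ.mulVec p + (M₂ ^ n)ᵀ.mulVec q + (M₃ ^ n)ᵀ.mulVec x₃ = 0 := by
    intro n
    induction n using Nat.strong_induction_on with
    | _ n ih =>
      match n with
      | 0 => simp only [pow_zero, Matrix.transpose_one, Matrix.one_mulVec, hx₃]; abel
      | 1 =>
        simp only [pow_one, hx₃]
        simp only [Matrix.transpose_sub, Matrix.sub_mulVec] at hAB
        simp only [Matrix.mulVec_neg, Matrix.mulVec_add]
        linear_combination hAB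
      | (m + 2) =>
        have hA := ih (m + 1) (by omega)
        have hB := ih m (by omega)
        rw [step_lemma hsq1 p m, step_lemma hsq2 q m, step_lemma hsq3 x₃ m]
        funext i
        have hA' := congrFun hA i
        have hB' := congrFun hB i
        simp only [Pi.add_apply, Pi.zero_apply] at hA' hB'
        simp only [Pi.add_apply, Pi.sub_apply, Pi.smul_apply, smul_eq_mul, Pi.zero_apply]
        linear_combination t * hA' - hB'
  have hne : ¬(p = 0 ∧ q = 0 ∧ x₃ = 0) := fun ⟨h1, h2, _⟩ => hpq ⟨h1, h2⟩
  refine ⟨⟨p, q, x₃, hne, fun n _ => ?_⟩, ?_⟩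
  · simp only [Matrix.SpecialLinearGroup.coe_pow]
    exact key n
  · intro hJ
    have hx : ¬(![p, q, x₃] = 0 ∧ (0 : Fin 2 → ℤ) = 0) := by
      rintro ⟨h, -⟩
      exact hne ⟨congrFun h 0, congrFun h 1, congrFun h 2⟩
    have hfin := hJ ![p, q, x₃] 0 hx
    have hsub : Set.Ici 1 ⊆ {n : ℕ |
        (∑ i, ((((![T₁, T₂, T₃] i ^ n : SL2)) : Matrix (Fin 2) (Fin 2) ℤ))ᵀ.mulVec
          (![p, q, x₃] i)) + 0 = 0} := by
      intro n _
      simp only [Set.mem_setOf_eq, Fin.sum_univ_three, Matrix.cons_val_zero,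
        Matrix.cons_val_one, Matrix.head_cons, Matrix.cons_val_two, Matrix.tail_cons,
        Matrix.SpecialLinearGroup.coe_pow, add_zero]
      exact key n
    exact (Set.Ici_infinite 1).mono hsub hfin
end
end

section
/- Let T₁,…,T_k ∈ SL(2,ℤ) be commuting automorphisms of 𝕋². Then T₁,…,T_k are jointly mixing if and only if each T_i and each T_i^{−1}T_j (i ≠ j) is mixing. -/
open MeasureTheory Matrix Filter Topology

noncomputable section

/-- A single toral automorphism is mixing (Fourier-analytic characterization). -/
def MixingT (g : SL2) : Prop :=
  ∀ x y : Fin 2 → ℤ, ¬(x = 0 ∧ y = 0) →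
    {n : ℕ | ((g ^ n : SL2) : Matrix (Fin 2) (Fin 2) ℤ)ᵀ.mulVec x + y = 0}.Finite


lemma finite_zero_set {m : ℕ} (μ a : Fin m → ℝ) (hμ : ∀ i, μ i ≠ 0)
    (hd : ∀ i j, i ≠ j → |μ i| ≠ |μ j|) (ha : a ≠ 0) :
    {n : ℕ | ∑ i, a i * μ i ^ n = 0}.Finite := by
  classical
  set F : Finset (Fin m) := Finset.univ.filter (fun i => a i ≠ 0) with hF
  have hFne : F.Nonempty := by
    obtain ⟨i, hi⟩ := Function.ne_iff.mp ha
    exact ⟨i, by simp only [hF, Finset.mem_filter, Finset.mem_univ, true_and]; simpa using hi⟩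
  obtain ⟨i₀, hi₀F, hmax⟩ := F.exists_max_image (fun i => |μ i|) hFne
  have hai₀ : a i₀ ≠ 0 := by simpa [hF] using hi₀F
  have hμpos : (0:ℝ) < |μ i₀| := abs_pos.mpr (hμ i₀)
  -- the auxiliary sequence tends to 0
  have htend : Tendsto (fun n : ℕ => ∑ j ∈ F.erase i₀, |a j| * (|μ j| / |μ i₀|) ^ n)
      atTop (nhds 0) := by
    have : Tendsto (fun n : ℕ => ∑ j ∈ F.erase i₀, |a j| * (|μ j| / |μ i₀|) ^ n)
        atTop (nhds (∑ j ∈ F.erase i₀, (0:ℝ))) := by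
      refine tendsto_finset_sum _ (fun j hj => ?_)
      have hjF := Finset.mem_of_mem_erase hj
      have hlt : |μ j| < |μ i₀| :=
        lt_of_le_of_ne (hmax j hjF) (hd j i₀ (Finset.ne_of_mem_erase hj))
      have h1 : |μ j| / |μ i₀| < 1 := (div_lt_one hμpos).mpr hlt
      have h0 : 0 ≤ |μ j| / |μ i₀| := by positivity
      have := tendsto_pow_atTop_nhds_zero_of_lt_one h0 h1
      simpa using (this.const_mul |a j|)
    simpa using this
  have hev : ∀ᶠ n in atTop, (∑ j ∈ F.erase i₀, |a j| * (|μ j| / |μ i₀|) ^ n) < |a i₀| :=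
    htend.eventually_lt_const (abs_pos.mpr hai₀)
  obtain ⟨N, hN⟩ := eventually_atTop.mp hev
  refine Set.Finite.subset (Set.finite_Iio N) (fun n hn => ?_)
  simp only [Set.mem_setOf_eq] at hn
  by_contra hnN
  have hnN' : N ≤ n := le_of_not_gt (by simpa using hnN)
  have hkey := hN n hnN'
  -- rewrite the sum over univ as sum over F
  have hsum : ∑ i, a i * μ i ^ n = ∑ i ∈ F, a i * μ i ^ n := by
    refine (Finset.sum_subset (Finset.subset_univ F) ?_).symm
    intro i _ hiF
    have : a i = 0 := by
      by_contra h; exact hiF (by simp [hF, h])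
    simp [this]
  rw [hsum, ← Finset.add_sum_erase _ _ hi₀F] at hn
  have heq : a i₀ * μ i₀ ^ n = -∑ j ∈ F.erase i₀, a j * μ j ^ n := by linarith
  have habs : |a i₀| * |μ i₀| ^ n ≤ ∑ j ∈ F.erase i₀, |a j| * |μ j| ^ n := by
    calc |a i₀| * |μ i₀| ^ n = |a i₀ * μ i₀ ^ n| := by
            rw [abs_mul, abs_pow]
      _ = |∑ j ∈ F.erase i₀, a j * μ j ^ n| := by rw [heq, abs_neg]
      _ ≤ ∑ j ∈ F.erase i₀, |a j * μ j ^ n| := Finset.abs_sum_le_sum_abs _ _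
      _ = ∑ j ∈ F.erase i₀, |a j| * |μ j| ^ n := by
            simp [abs_mul, abs_pow]
  have hlt : ∑ j ∈ F.erase i₀, |a j| * |μ j| ^ n < |a i₀| * |μ i₀| ^ n := by
    have hpow : (0:ℝ) < |μ i₀| ^ n := pow_pos hμpos n
    have := mul_lt_mul_of_pos_right hkey hpow
    calc ∑ j ∈ F.erase i₀, |a j| * |μ j| ^ n
        = (∑ j ∈ F.erase i₀, |a j| * (|μ j| / |μ i₀|) ^ n) * |μ i₀| ^ n := by
          rw [Finset.sum_mul]
          refine Finset.sum_congr rfl (fun j _ => ?_)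
          rw [div_pow, mul_assoc, div_mul_cancel₀]
          exact pow_ne_zero _ (ne_of_gt hμpos)
      _ < |a i₀| * |μ i₀| ^ n := this
  linarith

lemma finite_zero_set' {m : ℕ} (μ c : Fin m → ℝ) (c₀ : ℝ) (hμ : ∀ i, μ i ≠ 0)
    (h1 : ∀ i, |μ i| ≠ 1) (hd : ∀ i j, i ≠ j → |μ i| ≠ |μ j|)
    (hc : c ≠ 0 ∨ c₀ ≠ 0) :
    {n : ℕ | (∑ i, c i * μ i ^ n) + c₀ = 0}.Finite := by
  classical
  refine Set.Finite.subset
    (finite_zero_set (Fin.snoc μ 1) (Fin.snoc c c₀) ?_ ?_ ?_) ?_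
  · intro i
    induction i using Fin.lastCases with
    | last => simp
    | cast j => simpa using hμ j
  · intro i j hij
    induction i using Fin.lastCases with
    | last =>
      induction j using Fin.lastCases with
      | last => exact absurd rfl hij
      | cast j' =>
        simp only [Fin.snoc_castSucc, Fin.snoc_last, abs_one]
        exact (h1 j').symm
    | cast i' =>
      induction j using Fin.lastCases with
      | last =>
        simp only [Fin.snoc_castSucc, Fin.snoc_last, abs_one]
        exact h1 i'
      | cast j' =>
        simp only [Fin.snoc_castSucc]
        exact hd i' j' (fun h => hij (by rw [h]))
  · rcases hc with hc | hc
    · obtain ⟨i, hi⟩ := Function.ne_iff.mp hc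
      exact Function.ne_iff.mpr ⟨i.castSucc, by simpa [Fin.snoc_castSucc] using hi⟩
    · exact Function.ne_iff.mpr ⟨Fin.last m, by simpa [Fin.snoc_last] using hc⟩
  · intro n hn
    rw [Set.mem_setOf_eq] at hn ⊢
    rw [Fin.sum_univ_castSucc]
    simp only [Fin.snoc_castSucc, Fin.snoc_last, one_pow, mul_one]
    exact hn

/-- 2×2 "cross product" determinant of two vectors. -/
def D2 (u v : Fin 2 → ℝ) : ℝ := u 0 * v 1 - u 1 * v 0

lemma D2_smul_right (u v : Fin 2 → ℝ) (c : ℝ) : D2 u (c • v) = c * D2 u v := by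
  simp [D2]; ring

lemma D2_mulVec (P : Matrix (Fin 2) (Fin 2) ℝ) (u v : Fin 2 → ℝ) :
    D2 (P.mulVec u) (P.mulVec v) = P.det * D2 u v := by
  simp [D2, Matrix.mulVec, dotProduct, Fin.sum_univ_two, Matrix.det_fin_two]; ring

lemma D2_add_left (u u' v : Fin 2 → ℝ) : D2 (u + u') v = D2 u v + D2 u' v := by
  simp [D2]; ring

lemma D2_add_right (u v v' : Fin 2 → ℝ) : D2 u (v + v') = D2 u v + D2 u v' := by
  simp [D2]; ring

lemma D2_sum_left {k : ℕ} (f : Fin k → (Fin 2 → ℝ)) (v : Fin 2 → ℝ) :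
    D2 (∑ i, f i) v = ∑ i, D2 (f i) v := by
  simp only [D2, Finset.sum_apply, Finset.sum_mul, ← Finset.sum_sub_distrib]

lemma D2_sum_right {k : ℕ} (f : Fin k → (Fin 2 → ℝ)) (v : Fin 2 → ℝ) :
    D2 v (∑ i, f i) = ∑ i, D2 v (f i) := by
  simp only [D2, Finset.sum_apply, Finset.mul_sum, ← Finset.sum_sub_distrib]

lemma D2_cramer (v w u : Fin 2 → ℝ) (l : Fin 2) :
    D2 v w * u l = D2 u w * v l + D2 v u * w l := by
  fin_cases l <;> (show _ = _ ; simp [D2]) <;> ring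

lemma ker_dep (A : Matrix (Fin 2) (Fin 2) ℝ) (hA : A ≠ 0) {u v : Fin 2 → ℝ}
    (hu : A.mulVec u = 0) (hv : A.mulVec v = 0) : D2 u v = 0 := by
  have hu0 : A 0 0 * u 0 + A 0 1 * u 1 = 0 := by
    simpa [Matrix.mulVec, dotProduct, Fin.sum_univ_two] using congrFun hu 0
  have hu1 : A 1 0 * u 0 + A 1 1 * u 1 = 0 := by
    simpa [Matrix.mulVec, dotProduct, Fin.sum_univ_two] using congrFun hu 1
  have hv0 : A 0 0 * v 0 + A 0 1 * v 1 = 0 := by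
    simpa [Matrix.mulVec, dotProduct, Fin.sum_univ_two] using congrFun hv 0
  have hv1 : A 1 0 * v 0 + A 1 1 * v 1 = 0 := by
    simpa [Matrix.mulVec, dotProduct, Fin.sum_univ_two] using congrFun hv 1
  have : ∃ r c, A r c ≠ 0 := by
    by_contra hc
    push_neg at hc
    exact hA (by ext r c; simpa using hc r c)
  obtain ⟨r, c, hrc⟩ := this
  fin_cases r <;> fin_cases c
  · have key : A 0 0 * D2 u v = 0 := by
      simp only [D2]; linear_combination v 1 * hu0 - u 1 * hv0
    exact (mul_eq_zero.mp key).resolve_left hrc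
  · have key : A 0 1 * D2 u v = 0 := by
      simp only [D2]; linear_combination u 0 * hv0 - v 0 * hu0
    exact (mul_eq_zero.mp key).resolve_left hrc
  · have key : A 1 0 * D2 u v = 0 := by
      simp only [D2]; linear_combination v 1 * hu1 - u 1 * hv1
    exact (mul_eq_zero.mp key).resolve_left hrc
  · have key : A 1 1 * D2 u v = 0 := by
      simp only [D2]; linear_combination u 0 * hv1 - v 0 * hu1
    exact (mul_eq_zero.mp key).resolve_left hrc

lemma dep_smul {u v : Fin 2 → ℝ} (hu : u ≠ 0) (hD : D2 u v = 0) : ∃ c : ℝ, v = c • u := by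
  simp only [D2] at hD
  have : u 0 ≠ 0 ∨ u 1 ≠ 0 := by
    by_contra hc
    push_neg at hc
    exact hu (by ext l; fin_cases l <;> simp [hc.1, hc.2])
  rcases this with h0 | h1
  · refine ⟨v 0 / u 0, ?_⟩
    ext l
    fin_cases l
    · show v 0 = v 0 / u 0 * u 0
      field_simp
    · show v 1 = v 0 / u 0 * u 1
      field_simp
      linear_combination hD
  · refine ⟨v 1 / u 1, ?_⟩
    ext l
    fin_cases l
    · show v 0 = v 1 / u 1 * u 0
      field_simp
      linear_combination -hD
    · show v 1 = v 1 / u 1 * u 1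
      field_simp

section helpers2
variable {R : Type*} [CommRing R]

lemma CH2' (A : Matrix (Fin 2) (Fin 2) R) (h : A.det = 1) :
    A * A = A.trace • A - 1 := by
  rw [Matrix.det_fin_two] at h
  ext i j
  fin_cases i <;> fin_cases j <;>
    simp [Matrix.mul_apply, Fin.sum_univ_two, Matrix.trace, Fin.sum_univ_two,
      Matrix.one_apply, Matrix.diag] <;>
    (first | ring1 | linear_combination h | linear_combination -h | linear_combination (2:R) * h | linear_combination (-2:R) * h)
end helpers2

lemma eig_char (M : Matrix (Fin 2) (Fin 2) ℝ) (hdet : M.det = 1) {v : Fin 2 → ℝ} {μ : ℝ}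
    (hv : v ≠ 0) (h : M.mulVec v = μ • v) : μ ^ 2 - M.trace * μ + 1 = 0 := by
  have hCH : M * M = M.trace • M - 1 := CH2' M hdet
  have h2 : (M * M).mulVec v = (μ ^ 2) • v := by
    rw [← Matrix.mulVec_mulVec, h, Matrix.mulVec_smul, h, smul_smul, ← pow_two]
  rw [hCH, Matrix.sub_mulVec, Matrix.smul_mulVec, h, Matrix.one_mulVec] at h2
  obtain ⟨l, hl⟩ := Function.ne_iff.mp hv
  have hcomp := congrFun h2 l
  simp only [Pi.smul_apply, Pi.sub_apply, smul_eq_mul, smul_smul] at hcomp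
  have key : (μ ^ 2 - M.trace * μ + 1) * v l = 0 := by linear_combination -hcomp
  have hvl : v l ≠ 0 := by simpa using hl
  exact (mul_eq_zero.mp key).resolve_right hvl

lemma root_props {t μ : ℝ} (h : μ ^ 2 - t * μ + 1 = 0) (ht : 3 ≤ |t|) :
    μ ≠ 0 ∧ |μ| ≠ 1 := by
  constructor
  · rintro rfl; norm_num at h
  · intro habs
    rcases (abs_eq (by norm_num : (0:ℝ) ≤ 1)).mp habs with rfl | rfl
    · have h2 : t = 2 := by nlinarith
      rw [h2] at ht
      rw [abs_of_nonneg (by norm_num)] at ht; norm_num at ht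
    · have h2 : t = -2 := by nlinarith
      rw [h2] at ht
      rw [abs_of_nonpos (by norm_num)] at ht; norm_num at ht

lemma exists_eigvec (M : Matrix (Fin 2) (Fin 2) ℝ) (hdet : M.det = 1) (ht : 4 < M.trace ^ 2)
    {r : ℝ} (hr : r ^ 2 - M.trace * r + 1 = 0) :
    ∃ v : Fin 2 → ℝ, v ≠ 0 ∧ M.mulVec v = r • v := by
  rw [Matrix.det_fin_two] at hdet
  rw [Matrix.trace_fin_two] at hr ht
  by_cases hb : M 0 1 ≠ 0 ∨ r - M 0 0 ≠ 0
  · refine ⟨![M 0 1, r - M 0 0], ?_, ?_⟩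
    · intro h0
      rcases hb with h | h
      exacts [h (by simpa using congrFun h0 0), h (by simpa using congrFun h0 1)]
    · ext l
      fin_cases l <;> simp [Matrix.mulVec, dotProduct, Fin.sum_univ_two] <;>
        (first | ring1 | linear_combination -hr - hdet)
  · push_neg at hb
    obtain ⟨hb0, hb1⟩ := hb
    have ha : r = M 0 0 := by
      have := sub_eq_zero.mp hb1; linarith
    refine ⟨![r - M 1 1, M 1 0], ?_, ?_⟩
    · intro h0
      have h1 : r - M 1 1 = 0 := by simpa using congrFun h0 0
      have h2 : M 1 0 = 0 := by simpa using congrFun h0 1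
      have hd : r = M 1 1 := by linarith [sub_eq_zero.mp h1]
      nlinarith [hdet, hr, ht]
    · ext l
      fin_cases l <;> simp [Matrix.mulVec, dotProduct, Fin.sum_univ_two] <;>
        (first | ring1 | linear_combination -hr - hdet)

lemma eig_indep (M : Matrix (Fin 2) (Fin 2) ℝ) {lam nu : ℝ} {v w : Fin 2 → ℝ}
    (hne : lam ≠ nu) (hv : v ≠ 0) (hw : w ≠ 0)
    (h1 : M.mulVec v = lam • v) (h2 : M.mulVec w = nu • w) : D2 v w ≠ 0 := by
  intro hD
  obtain ⟨c, rfl⟩ := dep_smul hv hD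
  rw [Matrix.mulVec_smul, h1, smul_smul, smul_smul] at h2
  have hc : c * lam = nu * c := smul_left_injective ℝ hv h2
  have : c = 0 := by
    rcases mul_eq_zero.mp (show c * (lam - nu) = 0 by ring_nf; linarith) with h | h
    · exact h
    · exact absurd (by linarith : lam = nu) hne
  exact hw (by rw [this, zero_smul])

lemma D2_smul_left (u v : Fin 2 → ℝ) (c : ℝ) : D2 (c • u) v = c * D2 u v := by
  simp [D2]; ring


lemma sq_zero_column (B : Matrix (Fin 2) (Fin 2) ℤ) (hB : B ≠ 0) (h : B * B = 0) :
    ∃ x : Fin 2 → ℤ, x ≠ 0 ∧ B.mulVec x = 0 := by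
  have : ∃ r c, B r c ≠ 0 := by
    by_contra hc
    push_neg at hc
    exact hB (by ext r c; simpa using hc r c)
  obtain ⟨r, c, hrc⟩ := this
  refine ⟨fun k => B k c, fun h0 => hrc (by simpa using congrFun h0 r), ?_⟩
  ext r'
  have := congrFun (congrFun h r') c
  simpa [Matrix.mul_apply, Matrix.mulVec, dotProduct] using this

lemma notMix_of_pow_eq_one (g : SL2) (m : ℕ) (hm : 0 < m) (h : g ^ m = 1) :
    ¬ MixingT g := by
  intro hmix
  have hx : (![1,0] : Fin 2 → ℤ) ≠ 0 := by
    intro h0; simpa using congrFun h0 0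
  have hfin := hmix ![1,0] (-![1,0]) (fun hc => hx hc.1)
  have hsub : Set.range (fun j : ℕ => m * j) ⊆
      {n : ℕ | ((g ^ n : SL2) : Matrix (Fin 2) (Fin 2) ℤ)ᵀ.mulVec ![1,0] + -![1,0] = 0} := by
    rintro n ⟨j, rfl⟩
    have h1 : g ^ (m * j) = 1 := by rw [pow_mul, h, one_pow]
    show ((g ^ (m*j) : SL2) : Matrix (Fin 2) (Fin 2) ℤ)ᵀ.mulVec ![1,0] + -![1,0] = 0
    rw [h1]
    simp
  have hinf : (Set.range (fun j : ℕ => m * j)).Infinite :=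
    Set.infinite_range_of_injective (fun a b hab => by
      simpa [Nat.mul_left_cancel_iff hm] using hab)
  exact hinf (hfin.subset hsub)

lemma notMix_of_eigen (g : SL2) (x : Fin 2 → ℤ) (hx : x ≠ 0) (ε : ℤ) (hε : ε * ε = 1)
    (h : ((g : Matrix (Fin 2) (Fin 2) ℤ))ᵀ.mulVec x = ε • x) : ¬ MixingT g := by
  intro hmix
  set M := ((g : Matrix (Fin 2) (Fin 2) ℤ))ᵀ with hM
  have key : ∀ j : ℕ, (M ^ (2 * j)).mulVec x = x := by
    intro j
    induction j with
    | zero => simp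
    | succ j ih =>
      have : M ^ (2 * (j + 1)) = M ^ (2 * j) * (M * M) := by
        rw [← pow_two, ← pow_add]; ring_nf
      rw [this, ← Matrix.mulVec_mulVec, ← Matrix.mulVec_mulVec, h,
        Matrix.mulVec_smul, h, smul_smul, hε, one_smul, ih]
  have hfin := hmix x (-x) (fun hc => hx hc.1)
  have hsub : Set.range (fun j : ℕ => 2 * j) ⊆
      {n : ℕ | ((g ^ n : SL2) : Matrix (Fin 2) (Fin 2) ℤ)ᵀ.mulVec x + -x = 0} := by
    rintro n ⟨j, rfl⟩
    show ((g ^ (2*j) : SL2) : Matrix (Fin 2) (Fin 2) ℤ)ᵀ.mulVec x + -x = 0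
    rw [Matrix.SpecialLinearGroup.coe_pow, Matrix.transpose_pow, ← hM, key j]
    simp
  have hinf : (Set.range (fun j : ℕ => 2 * j)).Infinite :=
    Set.infinite_range_of_injective (fun a b hab => by omega)
  exact hinf (hfin.subset hsub)

lemma sl2_trace_sq (g : SL2) (h : MixingT g) :
    3 ≤ |Matrix.trace (g : Matrix (Fin 2) (Fin 2) ℤ)| := by
  by_contra hc
  push_neg at hc
  set A := ((g : Matrix (Fin 2) (Fin 2) ℤ)) with hA
  have hCH : A * A = A.trace • A - 1 := CH2' A g.2
  set t := A.trace with ht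
  have hlt := abs_lt.mp hc
  have h1 : -2 ≤ t := by omega
  have h2 : t ≤ 2 := by omega
  interval_cases t
  · -- t = -2
    have hT : Aᵀ * Aᵀ = (-2 : ℤ) • Aᵀ - 1 := by
      calc Aᵀ * Aᵀ = (A * A)ᵀ := (Matrix.transpose_mul A A).symm
        _ = ((-2 : ℤ) • A - 1)ᵀ := by rw [hCH]
        _ = (-2 : ℤ) • Aᵀ - 1 := by
            rw [Matrix.transpose_sub, Matrix.transpose_smul, Matrix.transpose_one]
    set B := Aᵀ + 1 with hB
    have hBB : B * B = 0 := by
      have e1 : B * B = Aᵀ * Aᵀ + Aᵀ + Aᵀ + 1 := by rw [hB]; noncomm_ring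
      rw [e1, hT]
      have h2s : (-2 : ℤ) • Aᵀ = -Aᵀ - Aᵀ := by rw [neg_smul, two_smul]; abel
      rw [h2s]; abel
    by_cases hB0 : B = 0
    · have hA1 : Aᵀ = -1 := by
        have := hB0
        rw [hB] at this
        linear_combination (norm := abel) this
      refine notMix_of_eigen g ![1,0] (fun h0 => by simpa using congrFun h0 0) (-1)
        (by norm_num) ?_ h
      rw [← hA, hA1, Matrix.neg_mulVec, Matrix.one_mulVec, neg_one_zsmul]
    · obtain ⟨x, hx, hBx⟩ := sq_zero_column B hB0 hBB
      refine notMix_of_eigen g x hx (-1) (by norm_num) ?_ h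
      have h' : Aᵀ.mulVec x + x = 0 := by
        have e : B.mulVec x = Aᵀ.mulVec x + x := by
          rw [hB, Matrix.add_mulVec, Matrix.one_mulVec]
        rw [← e]; exact hBx
      rw [← hA, neg_one_zsmul]
      exact eq_neg_of_add_eq_zero_left h'
  · -- t = -1
    have h2' : A * A = -A - 1 := by rw [hCH]; simp [neg_smul]
    have h3 : A ^ 3 = 1 := by
      have e : A ^ 3 = (A * A) * A := by rw [pow_succ, pow_two]
      rw [e, h2', sub_mul, neg_mul, one_mul, h2']
      abel
    refine notMix_of_pow_eq_one g 3 (by norm_num) (Subtype.coe_injective ?_) h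
    show ((g ^ 3 : SL2) : Matrix (Fin 2) (Fin 2) ℤ) = ((1 : SL2) : Matrix (Fin 2) (Fin 2) ℤ)
    rw [Matrix.SpecialLinearGroup.coe_pow, ← hA, h3, Matrix.SpecialLinearGroup.coe_one]
  · -- t = 0
    have h2' : A * A = -1 := by rw [hCH]; simp
    have h4 : A ^ 4 = 1 := by
      have e : A ^ 4 = (A * A) * (A * A) := by
        rw [show (4:ℕ) = 2 + 2 from rfl, pow_add, pow_two]
      rw [e, h2', neg_mul_neg, one_mul]
    refine notMix_of_pow_eq_one g 4 (by norm_num) (Subtype.coe_injective ?_) h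
    show ((g ^ 4 : SL2) : Matrix (Fin 2) (Fin 2) ℤ) = ((1 : SL2) : Matrix (Fin 2) (Fin 2) ℤ)
    rw [Matrix.SpecialLinearGroup.coe_pow, ← hA, h4, Matrix.SpecialLinearGroup.coe_one]
  · -- t = 1
    have h2' : A * A = A - 1 := by rw [hCH]; simp
    have h3 : A ^ 3 = -1 := by
      have e : A ^ 3 = (A * A) * A := by rw [pow_succ, pow_two]
      rw [e, h2', sub_mul, one_mul, h2']
      abel
    have h6 : A ^ 6 = 1 := by
      have e : A ^ 6 = (A ^ 3) * (A ^ 3) := by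
        rw [show (6:ℕ) = 3 + 3 from rfl, pow_add]
      rw [e, h3, neg_mul_neg, one_mul]
    refine notMix_of_pow_eq_one g 6 (by norm_num) (Subtype.coe_injective ?_) h
    show ((g ^ 6 : SL2) : Matrix (Fin 2) (Fin 2) ℤ) = ((1 : SL2) : Matrix (Fin 2) (Fin 2) ℤ)
    rw [Matrix.SpecialLinearGroup.coe_pow, ← hA, h6, Matrix.SpecialLinearGroup.coe_one]
  · -- t = 2
    have hT : Aᵀ * Aᵀ = (2 : ℤ) • Aᵀ - 1 := by
      calc Aᵀ * Aᵀ = (A * A)ᵀ := (Matrix.transpose_mul A A).symm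
        _ = ((2 : ℤ) • A - 1)ᵀ := by rw [hCH]
        _ = (2 : ℤ) • Aᵀ - 1 := by
            rw [Matrix.transpose_sub, Matrix.transpose_smul, Matrix.transpose_one]
    set B := Aᵀ - 1 with hB
    have hBB : B * B = 0 := by
      have e1 : B * B = Aᵀ * Aᵀ - Aᵀ - Aᵀ + 1 := by rw [hB]; noncomm_ring
      rw [e1, hT, two_smul]; abel
    by_cases hB0 : B = 0
    · have hA1 : Aᵀ = 1 := by
        have := hB0
        rw [hB, sub_eq_zero] at this
        exact this
      refine notMix_of_eigen g ![1,0] (fun h0 => by simpa using congrFun h0 0) 1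
        (by norm_num) ?_ h
      rw [← hA, hA1, Matrix.one_mulVec, one_smul]
    · obtain ⟨x, hx, hBx⟩ := sq_zero_column B hB0 hBB
      refine notMix_of_eigen g x hx 1 (by norm_num) ?_ h
      have h' : Aᵀ.mulVec x - x = 0 := by
        have e : B.mulVec x = Aᵀ.mulVec x - x := by
          rw [hB, Matrix.sub_mulVec, Matrix.one_mulVec]
        rw [← e]; exact hBx
      rw [← hA, one_smul]
      exact sub_eq_zero.mp h'

def rt (g : SL2) : Matrix (Fin 2) (Fin 2) ℝ :=
  ((Int.castRingHom ℝ).mapMatrix ((g : Matrix (Fin 2) (Fin 2) ℤ)))ᵀ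

lemma rt_mul (g h : SL2) : rt (g * h) = rt h * rt g := by
  simp only [rt]
  rw [Matrix.SpecialLinearGroup.coe_mul, _root_.map_mul, Matrix.transpose_mul]

lemma rt_one : rt (1 : SL2) = 1 := by
  simp [rt]

lemma rt_det (g : SL2) : (rt g).det = 1 := by
  rw [rt, Matrix.det_transpose, ← RingHom.map_det, g.2]
  simp

lemma rt_trace (g : SL2) :
    (rt g).trace = (((g : Matrix (Fin 2) (Fin 2) ℤ)).trace : ℝ) := by
  simp [rt, Matrix.trace, Matrix.diag, Fin.sum_univ_two, RingHom.mapMatrix_apply,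
    Matrix.map_apply]

lemma rt_mulVec_cast (g : SL2) (xz : Fin 2 → ℤ) (l : Fin 2) :
    (rt g).mulVec (fun j => ((xz j : ℤ) : ℝ)) l
      = ((((g : Matrix (Fin 2) (Fin 2) ℤ))ᵀ.mulVec xz l : ℤ) : ℝ) := by
  fin_cases l <;>
    simp [rt, Matrix.mulVec, dotProduct, Fin.sum_univ_two, RingHom.mapMatrix_apply,
      Matrix.map_apply, Matrix.transpose_apply] <;> push_cast <;> ring

theorem stmt7 {k : ℕ} (T : Fin k → SL2) (hcomm : ∀ i j, Commute (T i) (T j)) :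
    JointlyMixingSeq (fun i n => ((T i ^ n : SL2) : Matrix (Fin 2) (Fin 2) ℤ)) ↔
      (∀ i, MixingT (T i)) ∧ (∀ i j, i ≠ j → MixingT ((T i)⁻¹ * T j)) := by
  classical
  constructor
  · intro hJM
    refine ⟨fun i x y hxy => ?_, fun i j hij x y hxy => ?_⟩
    · -- each T i is mixing
      have hne : ¬((fun l => if l = i then x else 0) = (0 : Fin k → Fin 2 → ℤ) ∧ y = 0) := by
        rintro ⟨hx0, hy0⟩
        exact hxy ⟨by simpa using congrFun hx0 i, hy0⟩
      have hfin := hJM (fun l => if l = i then x else 0) y hne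
      refine hfin.subset ?_
      intro n hn
      rw [Set.mem_setOf_eq] at hn ⊢
      have hs : (∑ l, ((T l ^ n : SL2) : Matrix (Fin 2) (Fin 2) ℤ)ᵀ.mulVec
          (if l = i then x else 0)) = ((T i ^ n : SL2) : Matrix (Fin 2) (Fin 2) ℤ)ᵀ.mulVec x := by
        rw [Finset.sum_eq_single i]
        · simp
        · intro b _ hb; simp [hb]
        · intro hb; exact absurd (Finset.mem_univ i) hb
      rw [hs]
      exact hn
    · -- each (T i)⁻¹ * T j is mixing
      set G := (T i)⁻¹ * T j with hG
      set X : Fin k → Fin 2 → ℤ := fun l => if l = i then y else if l = j then x else 0 with hX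
      have hne : ¬(X = 0 ∧ (0 : Fin 2 → ℤ) = 0) := by
        rintro ⟨hX0, -⟩
        apply hxy
        constructor
        · have := congrFun hX0 j
          simpa [hX, (Ne.symm hij)] using this
        · have := congrFun hX0 i
          simpa [hX] using this
      have hfin := hJM X 0 hne
      refine Set.Finite.subset hfin ?_
      intro n hn
      rw [Set.mem_setOf_eq] at hn ⊢
      have hsum : (∑ l, ((T l ^ n : SL2) : Matrix (Fin 2) (Fin 2) ℤ)ᵀ.mulVec (X l))
          = ((T i ^ n : SL2) : Matrix (Fin 2) (Fin 2) ℤ)ᵀ.mulVec y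
            + ((T j ^ n : SL2) : Matrix (Fin 2) (Fin 2) ℤ)ᵀ.mulVec x := by
        rw [← Finset.sum_subset (Finset.subset_univ {i, j})]
        · rw [Finset.sum_pair hij]
          congr 1
          · simp [hX]
          · simp [hX, (Ne.symm hij)]
        · intro l _ hl
          simp only [Finset.mem_insert, Finset.mem_singleton] at hl
          push_neg at hl
          simp [hX, hl.1, hl.2]
      have hgrp : G ^ n * T i ^ n = T j ^ n := by
        have hc : Commute ((T i)⁻¹) (T j) := (hcomm i j).inv_left
        rw [hG, hc.mul_pow, inv_pow, mul_assoc, ← ((hcomm i j).pow_pow n n).eq,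
          ← mul_assoc, inv_mul_cancel, one_mul]
      have hmat : ((T j ^ n : SL2) : Matrix (Fin 2) (Fin 2) ℤ)ᵀ.mulVec x
          = ((T i ^ n : SL2) : Matrix (Fin 2) (Fin 2) ℤ)ᵀ.mulVec
              (((G ^ n : SL2) : Matrix (Fin 2) (Fin 2) ℤ)ᵀ.mulVec x) := by
        rw [← hgrp, Matrix.SpecialLinearGroup.coe_mul, Matrix.transpose_mul,
          ← Matrix.mulVec_mulVec]
      have hx' : ((G ^ n : SL2) : Matrix (Fin 2) (Fin 2) ℤ)ᵀ.mulVec x = -y :=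
        eq_neg_of_add_eq_zero_left hn
      rw [hsum, hmat, hx', Matrix.mulVec_neg, add_zero, add_neg_cancel]
  · rintro ⟨hmix1, hmix2⟩ x y hxy
    by_cases hk : k = 0
    · subst hk
      have hy0 : y ≠ 0 := fun h => hxy ⟨funext fun i => i.elim0, h⟩
      refine Set.Finite.subset Set.finite_empty ?_
      intro n hn
      rw [Set.mem_setOf_eq] at hn
      simp only [Finset.univ_eq_empty, Finset.sum_empty, zero_add] at hn
      exact absurd hn hy0
    · have hkpos : 0 < k := Nat.pos_of_ne_zero hk
      set i₀ : Fin k := ⟨0, hkpos⟩ with hi₀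
      have htri : ∀ g : SL2, MixingT g → (3:ℝ) ≤ |(rt g).trace| := by
        intro g hg
        have h3 := sl2_trace_sq g hg
        rw [rt_trace, ← Int.cast_abs]
        exact_mod_cast h3
      set M := rt (T i₀) with hM
      have hdetM : M.det = 1 := rt_det _
      have htM : (3:ℝ) ≤ |M.trace| := htri _ (hmix1 i₀)
      have ht4 : 4 < M.trace ^ 2 := by nlinarith [abs_nonneg M.trace, sq_abs M.trace]
      set t := M.trace with htdef
      set s := Real.sqrt (t ^ 2 - 4) with hs
      have hs2 : s ^ 2 = t ^ 2 - 4 := Real.sq_sqrt (by nlinarith)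
      have hspos : 0 < s := Real.sqrt_pos.mpr (by nlinarith)
      set lam := (t + s) / 2 with hlamdef
      set nu := (t - s) / 2 with hnudef
      have hlam : lam ^ 2 - t * lam + 1 = 0 := by
        have e : lam ^ 2 - t * lam + 1 = (4 - (t ^ 2 - s ^ 2)) / 4 := by
          rw [hlamdef]; ring
        rw [e, hs2]; ring
      have hnu : nu ^ 2 - t * nu + 1 = 0 := by
        have e : nu ^ 2 - t * nu + 1 = (4 - (t ^ 2 - s ^ 2)) / 4 := by
          rw [hnudef]; ring
        rw [e, hs2]; ring
      have hlamnu : lam ≠ nu := by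
        intro h
        rw [hlamdef, hnudef] at h
        have : s = 0 := by linarith
        linarith
      obtain ⟨v, hv0, hv⟩ := exists_eigvec M hdetM ht4 hlam
      obtain ⟨w, hw0, hw⟩ := exists_eigvec M hdetM ht4 hnu
      have hDvw : D2 v w ≠ 0 := eig_indep M hlamnu hv0 hw0 hv hw
      -- simultaneous eigenvectors for everything commuting with M
      have hgen : ∀ (r : ℝ) (u : Fin 2 → ℝ), u ≠ 0 → M.mulVec u = r • u →
          ∀ P : Matrix (Fin 2) (Fin 2) ℝ, P * M = M * P → ∃ c : ℝ, P.mulVec u = c • u := by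
        intro r u hu0 hu P hP
        have hru : r ^ 2 - t * r + 1 = 0 := eig_char M hdetM hu0 hu
        have hA : M - r • (1 : Matrix (Fin 2) (Fin 2) ℝ) ≠ 0 := by
          intro h0
          have hMr : M = r • 1 := by rwa [sub_eq_zero] at h0
          have hdet' : r ^ 2 = 1 := by
            have hd := hdetM
            rw [hMr] at hd
            simpa [Matrix.det_smul, Fintype.card_fin, pow_two] using hd
          have htr2 : t = 2 * r := by
            rw [htdef, hMr]
            simp [Matrix.trace_smul, Matrix.trace_one]
            ring
          nlinarith [ht4]
        have hAu : (M - r • 1).mulVec u = 0 := by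
          rw [Matrix.sub_mulVec, hu, Matrix.smul_mulVec, Matrix.one_mulVec, sub_self]
        have hcomm' : (M - r • (1 : Matrix (Fin 2) (Fin 2) ℝ)) * P
            = P * (M - r • (1 : Matrix (Fin 2) (Fin 2) ℝ)) := by
          rw [Matrix.sub_mul, Matrix.mul_sub, ← hP, Matrix.smul_mul, Matrix.mul_smul,
            Matrix.one_mul, Matrix.mul_one]
        have hAPu : (M - r • 1).mulVec (P.mulVec u) = 0 := by
          rw [Matrix.mulVec_mulVec, hcomm', ← Matrix.mulVec_mulVec, hAu, Matrix.mulVec_zero]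
        exact dep_smul hu0 (ker_dep _ hA hAu hAPu)
      have hcommM : ∀ g : SL2, Commute g (T i₀) → rt g * M = M * rt g := by
        intro g hcg
        rw [hM, ← rt_mul, ← rt_mul, hcg.eq]
      choose μ hμv using fun i : Fin k =>
        hgen lam v hv0 hv (rt (T i)) (hcommM (T i) (hcomm i i₀))
      choose ν hνw using fun i : Fin k =>
        hgen nu w hw0 hw (rt (T i)) (hcommM (T i) (hcomm i i₀))
      have hcancel : ∀ {a b : ℝ} {u : Fin 2 → ℝ}, u ≠ 0 → a • u = b • u → a = b :=
        fun {a b u} hu h => smul_left_injective ℝ hu h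
      have hμchar : ∀ i, (μ i) ^ 2 - (rt (T i)).trace * μ i + 1 = 0 :=
        fun i => eig_char (rt (T i)) (rt_det _) hv0 (hμv i)
      have hνchar : ∀ i, (ν i) ^ 2 - (rt (T i)).trace * ν i + 1 = 0 :=
        fun i => eig_char (rt (T i)) (rt_det _) hw0 (hνw i)
      have hμ0 : ∀ i, μ i ≠ 0 := fun i => (root_props (hμchar i) (htri _ (hmix1 i))).1
      have hμabs : ∀ i, |μ i| ≠ 1 := fun i => (root_props (hμchar i) (htri _ (hmix1 i))).2
      have hν0 : ∀ i, ν i ≠ 0 := fun i => (root_props (hνchar i) (htri _ (hmix1 i))).1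
      have hνabs : ∀ i, |ν i| ≠ 1 := fun i => (root_props (hνchar i) (htri _ (hmix1 i))).2
      have hμν : ∀ i, μ i * ν i = 1 := by
        intro i
        have e2 : (μ i * ν i) * D2 v w = D2 v w := by
          calc (μ i * ν i) * D2 v w = D2 (μ i • v) (ν i • w) := by
                rw [D2_smul_left, D2_smul_right]; ring
            _ = D2 ((rt (T i)).mulVec v) ((rt (T i)).mulVec w) := by rw [hμv i, hνw i]
            _ = (rt (T i)).det * D2 v w := D2_mulVec _ _ _
            _ = D2 v w := by rw [rt_det, one_mul]
        have h3 : (μ i * ν i - 1) * D2 v w = 0 := by linear_combination e2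
        rcases mul_eq_zero.mp h3 with h | h
        · linarith
        · exact absurd h hDvw
      have hinv : ∀ i : Fin k, (rt ((T i)⁻¹)).mulVec v = (μ i)⁻¹ • v := by
        intro i
        obtain ⟨c, hc⟩ := hgen lam v hv0 hv (rt ((T i)⁻¹))
          (hcommM _ ((hcomm i i₀).inv_left))
        have hcomp : (rt (T i)).mulVec ((rt ((T i)⁻¹)).mulVec v) = v := by
          rw [Matrix.mulVec_mulVec, ← rt_mul, inv_mul_cancel, rt_one, Matrix.one_mulVec]
        rw [hc, Matrix.mulVec_smul, hμv i, smul_smul] at hcomp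
        have h1 : (c * μ i) • v = (1 : ℝ) • v := by rw [hcomp, one_smul]
        have h2 : c * μ i = 1 := hcancel hv0 h1
        have h3 : c = (μ i)⁻¹ := eq_inv_of_mul_eq_one_left h2
        rw [hc, h3]
      have hμdist : ∀ i j, i ≠ j → |μ i| ≠ |μ j| := by
        intro i j hij
        have hGv : (rt ((T i)⁻¹ * T j)).mulVec v = ((μ i)⁻¹ * μ j) • v := by
          rw [rt_mul, ← Matrix.mulVec_mulVec, hinv i, Matrix.mulVec_smul, hμv j,
            smul_smul, mul_comm]
        have hchar := eig_char _ (rt_det _) hv0 hGv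
        have habs := (root_props hchar (htri _ (hmix2 i j hij))).2
        intro heq
        apply habs
        rw [abs_mul, abs_inv, heq]
        exact inv_mul_cancel₀ (abs_ne_zero.mpr (hμ0 j))
      have hνinv : ∀ i, ν i = (μ i)⁻¹ := fun i => eq_inv_of_mul_eq_one_right (hμν i)
      have hνdist : ∀ i j, i ≠ j → |ν i| ≠ |ν j| := by
        intro i j hij heq
        rw [hνinv i, hνinv j, abs_inv, abs_inv] at heq
        exact hμdist i j hij (inv_injective heq)
      -- coordinate functionals
      have hφ : ∀ i (u : Fin 2 → ℝ), D2 ((rt (T i)).mulVec u) w = μ i * D2 u w := by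
        intro i u
        have e : D2 ((rt (T i)).mulVec u) ((rt (T i)).mulVec w) = D2 u w := by
          rw [D2_mulVec, rt_det, one_mul]
        rw [hνw i, D2_smul_right] at e
        calc D2 ((rt (T i)).mulVec u) w
            = (μ i * ν i) * D2 ((rt (T i)).mulVec u) w := by rw [hμν i, one_mul]
          _ = μ i * (ν i * D2 ((rt (T i)).mulVec u) w) := by ring
          _ = μ i * D2 u w := by rw [e]
      have hψ : ∀ i (u : Fin 2 → ℝ), D2 v ((rt (T i)).mulVec u) = ν i * D2 v u := by
        intro i u
        have e : D2 ((rt (T i)).mulVec v) ((rt (T i)).mulVec u) = D2 v u := by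
          rw [D2_mulVec, rt_det, one_mul]
        rw [hμv i, D2_smul_left] at e
        calc D2 v ((rt (T i)).mulVec u)
            = (ν i * μ i) * D2 v ((rt (T i)).mulVec u) := by
              rw [mul_comm (ν i) (μ i), hμν i, one_mul]
          _ = ν i * (μ i * D2 v ((rt (T i)).mulVec u)) := by ring
          _ = ν i * D2 v u := by rw [e]
      have hφn : ∀ (i : Fin k) (n : ℕ) (u : Fin 2 → ℝ),
          D2 ((rt (T i ^ n)).mulVec u) w = μ i ^ n * D2 u w := by
        intro i n
        induction n with
        | zero => intro u; rw [pow_zero, rt_one, Matrix.one_mulVec, pow_zero, one_mul]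
        | succ n ih =>
          intro u
          rw [pow_succ, rt_mul, ← Matrix.mulVec_mulVec, hφ i, ih, pow_succ]
          ring
      have hψn : ∀ (i : Fin k) (n : ℕ) (u : Fin 2 → ℝ),
          D2 v ((rt (T i ^ n)).mulVec u) = ν i ^ n * D2 v u := by
        intro i n
        induction n with
        | zero => intro u; rw [pow_zero, rt_one, Matrix.one_mulVec, pow_zero, one_mul]
        | succ n ih =>
          intro u
          rw [pow_succ, rt_mul, ← Matrix.mulVec_mulVec, hψ i, ih, pow_succ]
          ring
      set xr : Fin k → Fin 2 → ℝ := fun i l => ((x i l : ℤ) : ℝ) with hxr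
      set yr : Fin 2 → ℝ := fun l => ((y l : ℤ) : ℝ) with hyr
      have heqr : ∀ n : ℕ,
          ((∑ i, ((T i ^ n : SL2) : Matrix (Fin 2) (Fin 2) ℤ)ᵀ.mulVec (x i)) + y = 0) →
          (∑ i, (rt (T i ^ n)).mulVec (xr i)) + yr = 0 := by
        intro n hn
        funext l
        have h0 := congrFun hn l
        simp only [Pi.add_apply, Pi.zero_apply, Finset.sum_apply] at h0
        show (∑ i, (rt (T i ^ n)).mulVec (xr i)) l + yr l = 0
        rw [Finset.sum_apply]
        have hterm : ∀ i : Fin k, (rt (T i ^ n)).mulVec (xr i) l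
            = ((((T i ^ n : SL2) : Matrix (Fin 2) (Fin 2) ℤ)ᵀ.mulVec (x i)) l : ℝ) :=
          fun i => rt_mulVec_cast _ _ _
        rw [Finset.sum_congr rfl (fun i _ => hterm i)]
        rw [hyr]
        rw [← Int.cast_sum]
        rw [show ((∑ i, (((T i ^ n : SL2) : Matrix (Fin 2) (Fin 2) ℤ)ᵀ.mulVec (x i)) l : ℤ) : ℝ)
            + ((y l : ℤ) : ℝ)
            = (((∑ i, (((T i ^ n : SL2) : Matrix (Fin 2) (Fin 2) ℤ)ᵀ.mulVec (x i)) l + y l : ℤ)) : ℝ)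
          from by push_cast; ring]
        rw [h0]
        simp
      by_cases hφ0 : (∀ i, D2 (xr i) w = 0) ∧ D2 yr w = 0
      · by_cases hψ0 : (∀ i, D2 v (xr i) = 0) ∧ D2 v yr = 0
        · exfalso
          apply hxy
          have hzero : ∀ u : Fin 2 → ℝ, D2 u w = 0 → D2 v u = 0 → u = 0 := by
            intro u h1 h2
            funext l
            have hcr := D2_cramer v w u l
            rw [h1, h2] at hcr
            simp only [zero_mul, add_zero] at hcr
            exact (mul_eq_zero.mp hcr).resolve_left hDvw
          constructor
          · funext i l
            have hx0 : xr i = 0 := hzero _ (hφ0.1 i) (hψ0.1 i)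
            have h5 : ((x i l : ℤ) : ℝ) = 0 := by simpa [hxr] using congrFun hx0 l
            show x i l = 0
            exact_mod_cast h5
          · funext l
            have hy0 : yr = 0 := hzero _ hφ0.2 hψ0.2
            have h5 : ((y l : ℤ) : ℝ) = 0 := by simpa [hyr] using congrFun hy0 l
            show y l = 0
            exact_mod_cast h5
        · -- use ψ coordinate
          have hc' : (fun i => D2 v (xr i)) ≠ 0 ∨ D2 v yr ≠ 0 := by
            rw [not_and_or] at hψ0
            rcases hψ0 with h | h
            · push_neg at h
              obtain ⟨i, hi⟩ := h
              exact Or.inl (Function.ne_iff.mpr ⟨i, by simpa using hi⟩)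
            · exact Or.inr h
          refine Set.Finite.subset
            (finite_zero_set' ν (fun i => D2 v (xr i)) (D2 v yr) hν0 hνabs hνdist hc') ?_
          intro n hn
          rw [Set.mem_setOf_eq] at hn ⊢
          have h2 := heqr n hn
          have h3 := congrArg (fun u => D2 v u) h2
          rw [D2_add_right, D2_sum_right] at h3
          rw [Finset.sum_congr rfl (fun i _ => hψn i n (xr i))] at h3
          have hD20 : D2 v (0 : Fin 2 → ℝ) = 0 := by simp [D2]
          rw [hD20] at h3
          rw [show (∑ i, D2 v (xr i) * ν i ^ n) = ∑ i, ν i ^ n * D2 v (xr i) from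
            Finset.sum_congr rfl fun i _ => mul_comm _ _]
          exact h3
      · -- use φ coordinate
        have hc' : (fun i => D2 (xr i) w) ≠ 0 ∨ D2 yr w ≠ 0 := by
          rw [not_and_or] at hφ0
          rcases hφ0 with h | h
          · push_neg at h
            obtain ⟨i, hi⟩ := h
            exact Or.inl (Function.ne_iff.mpr ⟨i, by simpa using hi⟩)
          · exact Or.inr h
        refine Set.Finite.subset
          (finite_zero_set' μ (fun i => D2 (xr i) w) (D2 yr w) hμ0 hμabs hμdist hc') ?_
        intro n hn
        rw [Set.mem_setOf_eq] at hn ⊢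
        have h2 := heqr n hn
        have h3 := congrArg (fun u => D2 u w) h2
        rw [D2_add_left, D2_sum_left] at h3
        rw [Finset.sum_congr rfl (fun i _ => hφn i n (xr i))] at h3
        have hD20 : D2 (0 : Fin 2 → ℝ) w = 0 := by simp [D2]
        rw [hD20] at h3
        rw [show (∑ i, D2 (xr i) w * μ i ^ n) = ∑ i, μ i ^ n * D2 (xr i) w from
          Finset.sum_congr rfl fun i _ => mul_comm _ _]
        exact h3
end
end

section
/- Let H be a subgroup of SL(2,ℤ). The action of H on 𝕋² is mixing (i.e. for every sequence h_n ∈ H with h_n → ∞ and every (x,y) ∈ (ℤ²)² − {(0,0)}, the equality h_nᵀx + y = 0 holds only finitely often) if and only if H contains no nontrivial unipotent elements. -/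
open Matrix Filter Topology
open Polynomial

noncomputable section

/-- The action of a subgroup `H ≤ SL(2,ℤ)` on 𝕋² is mixing: every sequence in `H`
tending to infinity is a mixing sequence (Fourier-analytic characterization). -/
def MixingAction (H : Subgroup SL2) : Prop :=
  ∀ h : ℕ → SL2, (∀ n, h n ∈ H) → Tendsto h atTop cofinite →
    ∀ x y : Fin 2 → ℤ, ¬(x = 0 ∧ y = 0) →
      {n : ℕ | ((h n : Matrix (Fin 2) (Fin 2) ℤ))ᵀ.mulVec x + y = 0}.Finite

lemma eval_charpoly_fin_two (M : Matrix (Fin 2) (Fin 2) ℂ) (z : ℂ) :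
    M.charpoly.eval z = (z - M 0 0) * (z - M 1 1) - M 0 1 * M 1 0 := by
  rw [Matrix.charpoly, Matrix.det_fin_two]
  simp [Matrix.charmatrix_apply, Matrix.diagonal]

lemma unip_iff (g : SL2) :
    IsUnipotent (g : Matrix (Fin 2) (Fin 2) ℤ) ↔
      (g : Matrix (Fin 2) (Fin 2) ℤ) 0 0 + (g : Matrix (Fin 2) (Fin 2) ℤ) 1 1 = 2 := by
  set M := (g : Matrix (Fin 2) (Fin 2) ℤ)
  have hdet : M 0 0 * M 1 1 - M 0 1 * M 1 0 = 1 := by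
    rw [← Matrix.det_fin_two]; exact g.prop
  have heval : ∀ z : ℂ, (M.map (Int.cast : ℤ → ℂ)).charpoly.eval z =
      (z - (M 0 0 : ℂ)) * (z - (M 1 1 : ℂ)) - (M 0 1 : ℂ) * (M 1 0 : ℂ) := by
    intro z
    rw [eval_charpoly_fin_two]
    simp [Matrix.map_apply]
  constructor
  · intro hU
    have hdeg : (0:WithBot ℕ) < (M.map (Int.cast : ℤ → ℂ)).charpoly.degree := by
      rw [Matrix.charpoly_degree_eq_dim]
      simp
    obtain ⟨z, hz⟩ := Complex.exists_root hdeg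
    have hz1 := hU z hz
    subst hz1
    have h1 : ((1 : ℂ) - (M 0 0 : ℂ)) * (1 - (M 1 1 : ℂ)) - (M 0 1 : ℂ) * (M 1 0 : ℂ) = 0 := by
      rw [← heval]; exact hz
    have hdetC : (M 0 0 : ℂ) * (M 1 1 : ℂ) - (M 0 1 : ℂ) * (M 1 0 : ℂ) = 1 := by
      exact_mod_cast congrArg (Int.cast : ℤ → ℂ) hdet
    have : ((M 0 0 + M 1 1 : ℤ) : ℂ) = ((2 : ℤ) : ℂ) := by
      push_cast
      linear_combination -h1 + hdetC
    exact_mod_cast this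
  · intro ht z hz
    have h1 : (z - (M 0 0 : ℂ)) * (z - (M 1 1 : ℂ)) - (M 0 1 : ℂ) * (M 1 0 : ℂ) = 0 := by
      rw [← heval]; exact hz
    have hdetC : (M 0 0 : ℂ) * (M 1 1 : ℂ) - (M 0 1 : ℂ) * (M 1 0 : ℂ) = 1 := by
      exact_mod_cast congrArg (Int.cast : ℤ → ℂ) hdet
    have htC : (M 0 0 : ℂ) + (M 1 1 : ℂ) = 2 := by
      exact_mod_cast congrArg (Int.cast : ℤ → ℂ) ht
    have h2 : (z - 1) ^ 2 = 0 := by linear_combination h1 + z * htC - hdetC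
    have h3 := pow_eq_zero_iff (n := 2) (by norm_num) |>.mp h2
    exact sub_eq_zero.mp h3

/-- A nonzero fixed vector of `gᵀ` forces trace 2. -/
lemma trace_eq_two_of_fixed (g : SL2) (x : Fin 2 → ℤ) (hx : x ≠ 0)
    (hfix : (g : Matrix (Fin 2) (Fin 2) ℤ)ᵀ.mulVec x = x) :
    (g : Matrix (Fin 2) (Fin 2) ℤ) 0 0 + (g : Matrix (Fin 2) (Fin 2) ℤ) 1 1 = 2 := by
  set M := (g : Matrix (Fin 2) (Fin 2) ℤ)
  have hdet : M 0 0 * M 1 1 - M 0 1 * M 1 0 = 1 := by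
    rw [← Matrix.det_fin_two]; exact g.prop
  have e0 : M 0 0 * x 0 + M 1 0 * x 1 = x 0 := by
    have := congrFun hfix 0
    simpa [Matrix.mulVec, dotProduct, Fin.sum_univ_two, Matrix.transpose_apply] using this
  have e1 : M 0 1 * x 0 + M 1 1 * x 1 = x 1 := by
    have := congrFun hfix 1
    simpa [Matrix.mulVec, dotProduct, Fin.sum_univ_two, Matrix.transpose_apply] using this
  have hx' : x 0 ≠ 0 ∨ x 1 ≠ 0 := by
    by_contra hc
    push_neg at hc
    apply hx
    funext i
    fin_cases i <;> simp [hc.1, hc.2]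
  rcases hx' with h | h
  · have : (M 0 0 + M 1 1 - 2) * x 0 = 0 := by
      linear_combination (1 - M 1 1) * e0 + M 1 0 * e1 + x 0 * hdet
    rcases mul_eq_zero.mp this with h' | h'
    · linarith
    · exact absurd h' h
  · have : (M 0 0 + M 1 1 - 2) * x 1 = 0 := by
      linear_combination M 0 1 * e0 + (1 - M 0 0) * e1 + x 1 * hdet
    rcases mul_eq_zero.mp this with h' | h'
    · linarith
    · exact absurd h' h

/-- Trace 2 gives a nonzero fixed vector of `gᵀ`. -/
lemma exists_fixed_of_trace_eq_two (g : SL2)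
    (ht : (g : Matrix (Fin 2) (Fin 2) ℤ) 0 0 + (g : Matrix (Fin 2) (Fin 2) ℤ) 1 1 = 2) :
    ∃ x : Fin 2 → ℤ, x ≠ 0 ∧ (g : Matrix (Fin 2) (Fin 2) ℤ)ᵀ.mulVec x = x := by
  set M := (g : Matrix (Fin 2) (Fin 2) ℤ) with hM
  have hdet : M 0 0 * M 1 1 - M 0 1 * M 1 0 = 1 := by
    rw [← Matrix.det_fin_two]; exact g.prop
  by_cases hc : M 1 0 = 0
  · -- then M 0 0 = M 1 1 = 1, take (0,1)
    have h00 : M 0 0 = 1 := by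
      have h1 : M 0 0 * M 1 1 = 1 := by rw [hc] at hdet; linarith
      have := Int.eq_one_or_neg_one_of_mul_eq_one' h1
      rcases this with ⟨ha, hb⟩ | ⟨ha, hb⟩
      · exact ha
      · rw [ha, hb] at ht; norm_num at ht
    have h11 : M 1 1 = 1 := by linarith
    refine ⟨![0, 1], ?_, ?_⟩
    · intro h
      have := congrFun h 1
      simp at this
    · funext i
      fin_cases i <;>
        simp [Matrix.mulVec, dotProduct, Fin.sum_univ_two, Matrix.transpose_apply,
          hc, h00, h11]
  · refine ⟨![M 1 0, 1 - M 0 0], ?_, ?_⟩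
    · intro h
      have := congrFun h 0
      simp at this
      exact hc this
    · funext i
      fin_cases i
      · simp [Matrix.mulVec, dotProduct, Fin.sum_univ_two, Matrix.transpose_apply]
        ring
      · simp [Matrix.mulVec, dotProduct, Fin.sum_univ_two, Matrix.transpose_apply]
        linear_combination ht - hdet

lemma sq_eq (g : SL2)
    (ht : (g : Matrix (Fin 2) (Fin 2) ℤ) 0 0 + (g : Matrix (Fin 2) (Fin 2) ℤ) 1 1 = 2) :
    (g : Matrix (Fin 2) (Fin 2) ℤ) * (g : Matrix (Fin 2) (Fin 2) ℤ) + 1 =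
      (g : Matrix (Fin 2) (Fin 2) ℤ) + (g : Matrix (Fin 2) (Fin 2) ℤ) := by
  set M := (g : Matrix (Fin 2) (Fin 2) ℤ)
  have hdet : M 0 0 * M 1 1 - M 0 1 * M 1 0 = 1 := by
    rw [← Matrix.det_fin_two]; exact g.prop
  funext i j
  fin_cases i <;> fin_cases j <;>
    simp [Matrix.mul_apply, Matrix.add_apply, Matrix.one_apply, Fin.sum_univ_two]
  · linear_combination -hdet + M 0 0 * ht
  · linear_combination M 0 1 * ht
  · linear_combination M 1 0 * ht
  · linear_combination -hdet + M 1 1 * ht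


lemma pow_formula (g : SL2)
    (ht : (g : Matrix (Fin 2) (Fin 2) ℤ) 0 0 + (g : Matrix (Fin 2) (Fin 2) ℤ) 1 1 = 2) (k : ℕ) :
    ((g ^ k : SL2) : Matrix (Fin 2) (Fin 2) ℤ) =
      1 + (k : ℤ) • ((g : Matrix (Fin 2) (Fin 2) ℤ) - 1) := by
  set M := (g : Matrix (Fin 2) (Fin 2) ℤ) with hM
  set N : Matrix (Fin 2) (Fin 2) ℤ := M - 1 with hN
  have hNN : N * N = 0 := by
    have hsq := sq_eq g ht
    have expand : N * N = (M * M + 1) - (M + M) := by rw [hN]; noncomm_ring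
    rw [expand, hsq, sub_self]
  induction k with
  | zero => simp
  | succ k ih =>
    rw [pow_succ, Matrix.SpecialLinearGroup.coe_mul, ih]
    have hMN : M = 1 + N := by rw [hN]; noncomm_ring
    rw [← hM, hMN]
    push_cast
    rw [mul_add, mul_one, add_mul, one_mul, smul_mul_assoc, hNN, smul_zero]
    rw [add_smul, one_smul]
    abel

lemma not_finOrder (g : SL2)
    (ht : (g : Matrix (Fin 2) (Fin 2) ℤ) 0 0 + (g : Matrix (Fin 2) (Fin 2) ℤ) 1 1 = 2)
    (hg : g ≠ 1) : ¬IsOfFinOrder g := by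
  intro hfo
  obtain ⟨k, hk, hgk⟩ := isOfFinOrder_iff_pow_eq_one.mp hfo
  have h1 : ((g ^ k : SL2) : Matrix (Fin 2) (Fin 2) ℤ) = 1 := by
    rw [hgk]; rfl
  rw [pow_formula g ht k] at h1
  have h2 : (k : ℤ) • ((g : Matrix (Fin 2) (Fin 2) ℤ) - 1) = 0 := by
    have := add_eq_left.mp h1
    exact this
  have h3 : ((g : Matrix (Fin 2) (Fin 2) ℤ) - 1) = 0 := by
    rcases smul_eq_zero.mp h2 with h | h
    · exfalso
      have : k = 0 := by exact_mod_cast h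
      omega
    · exact h
  apply hg
  apply Subtype.coe_injective
  rw [sub_eq_zero] at h3
  exact h3

theorem stmt17 (H : Subgroup SL2) :
    MixingAction H ↔ ∀ g ∈ H, IsUnipotent (g : Matrix (Fin 2) (Fin 2) ℤ) → g = 1 := by
  constructor
  · intro hmix g hgH hU
    by_contra hg1
    have ht := (unip_iff g).mp hU
    obtain ⟨v, hv, hfix⟩ := exists_fixed_of_trace_eq_two g ht
    have hnf := not_finOrder g ht hg1
    have hinj : Function.Injective (fun n : ℕ => g ^ n) :=
      injective_pow_iff_not_isOfFinOrder.mpr hnf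
    have htend : Tendsto (fun n : ℕ => g ^ n) atTop cofinite := by
      rw [← Nat.cofinite_eq_atTop]
      exact hinj.tendsto_cofinite
    have fixpow : ∀ n : ℕ, ((g ^ n : SL2) : Matrix (Fin 2) (Fin 2) ℤ)ᵀ.mulVec v = v := by
      intro n
      rw [Matrix.SpecialLinearGroup.coe_pow, Matrix.transpose_pow]
      induction n with
      | zero => simp
      | succ n ih =>
        rw [pow_succ', ← Matrix.mulVec_mulVec, ih, hfix]
    have hfin := hmix (fun n => g ^ n) (fun n => H.pow_mem hgH n) htend v (-v)
      (fun hc => hv hc.1)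
    have hall : ∀ n : ℕ, n ∈ {n : ℕ | ((g ^ n : SL2) : Matrix (Fin 2) (Fin 2) ℤ)ᵀ.mulVec v + -v = 0} := by
      intro n
      simp only [Set.mem_setOf_eq, fixpow n, add_neg_cancel]
    rw [Set.eq_univ_of_forall hall] at hfin
    exact Set.infinite_univ hfin
  · intro hH h hmem htend x y hxy
    by_cases hx : x = 0
    · have hy : y ≠ 0 := fun hy => hxy ⟨hx, hy⟩
      have : {n : ℕ | ((h n : Matrix (Fin 2) (Fin 2) ℤ))ᵀ.mulVec x + y = 0} = ∅ := by
        ext n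
        simp [hx, Matrix.mulVec_zero, hy]
      rw [this]
      exact Set.finite_empty
    · set S := {n : ℕ | ((h n : Matrix (Fin 2) (Fin 2) ℤ))ᵀ.mulVec x + y = 0} with hS
      rcases Set.eq_empty_or_nonempty S with he | ⟨n0, hn0⟩
      · rw [he]; exact Set.finite_empty
      have key : ∀ n ∈ S, h n = h n0 := by
        intro n hn
        have hn' : ((h n : Matrix (Fin 2) (Fin 2) ℤ))ᵀ.mulVec x = -y := by
          have := hn
          rw [hS, Set.mem_setOf_eq] at this
          exact eq_neg_of_add_eq_zero_left this
        have hm' : ((h n0 : Matrix (Fin 2) (Fin 2) ℤ))ᵀ.mulVec x = -y := by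
          have := hn0
          rw [hS, Set.mem_setOf_eq] at this
          exact eq_neg_of_add_eq_zero_left this
        set g : SL2 := h n * (h n0)⁻¹ with hg
        have hgmem : g ∈ H := H.mul_mem (hmem n) (H.inv_mem (hmem n0))
        have hfixg : (g : Matrix (Fin 2) (Fin 2) ℤ)ᵀ.mulVec x = x := by
          rw [hg, Matrix.SpecialLinearGroup.coe_mul, Matrix.transpose_mul,
            ← Matrix.mulVec_mulVec, hn', ← hm', Matrix.mulVec_mulVec,
            ← Matrix.transpose_mul, ← Matrix.SpecialLinearGroup.coe_mul,
            mul_inv_cancel]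
          simp
        have ht2 := trace_eq_two_of_fixed g x hx hfixg
        have hUg : IsUnipotent (g : Matrix (Fin 2) (Fin 2) ℤ) := (unip_iff g).mpr ht2
        have := hH g hgmem hUg
        rw [hg] at this
        exact mul_inv_eq_one.mp this
      have hfin : {n : ℕ | h n = h n0}.Finite := by
        rw [← Nat.cofinite_eq_atTop] at htend
        have hmem' : ({h n0}ᶜ : Set SL2) ∈ cofinite := by
          rw [mem_cofinite, compl_compl]
          exact Set.finite_singleton _
        have h2 := mem_map.mp (htend hmem')
        rw [mem_cofinite, Set.preimage_compl, compl_compl] at h2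
        exact h2
      exact hfin.subset key
end
end
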